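/- arXiv:1609.04270 — 4 statements merged into one kernel-verified Lean document; each statement's English description precedes it below -/
import Mathlib

section
/- Let A be an antipodal family of subsets of [n] with |A| = 2^k for some 1 ≤ k ≤ n-1. Then |∂A| ≥ |∂(S ∪ S̄)|, where S = {x ⊆ [n] : x ⊆ [k-1]} is a (k-1)-dimensional subcube; that is, the union of two antipodal (k-1)-dimensional subcubes minimizes the edge boundary among antipodal families of size 2^k. -/
open Finset

/-- Number of edges of the hypercube graph `Q_n` with both endpoints in `A`
(ordered pairs counted, then halved). -/
def edgeCount {n : ℕ} (A : Finset (Finset (Fin n))) : ℕ :=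
  ((A ×ˢ A).filter (fun p => (symmDiff p.1 p.2).card = 1)).card / 2

/-- Number of edges of `Q_n` with exactly one endpoint in `A` (the edge boundary). -/
def edgeBoundary {n : ℕ} (A : Finset (Finset (Fin n))) : ℕ :=
  ((A ×ˢ Aᶜ).filter (fun p => (symmDiff p.1 p.2).card = 1)).card

/-- Number of edges of `Q_n` with one endpoint in `X` and the other in `Y`. -/
def edgesBetween {n : ℕ} (X Y : Finset (Finset (Fin n))) : ℕ :=
  ((X ×ˢ Y).filter (fun p => (symmDiff p.1 p.2).card = 1)).card

/-- The antipodal image of a family: pointwise complementation in `[n]`. -/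
def barFam {n : ℕ} (A : Finset (Finset (Fin n))) : Finset (Finset (Fin n)) :=
  A.image (fun x => xᶜ)

/-- Pointwise complementation within a ground set `s`. -/
def barOn {n : ℕ} (s : Finset (Fin n)) (A : Finset (Finset (Fin n))) :
    Finset (Finset (Fin n)) :=
  A.image (fun x => s \ x)

/-- The upper `i`-section of `A`, as a family of subsets of `[n] \ {i}`. -/
def secUp {n : ℕ} (A : Finset (Finset (Fin n))) (i : Fin n) : Finset (Finset (Fin n)) :=
  Finset.univ.filter (fun x => i ∉ x ∧ insert i x ∈ A)

/-- The lower `i`-section of `A`, as a family of subsets of `[n] \ {i}`. -/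
def secDown {n : ℕ} (A : Finset (Finset (Fin n))) (i : Fin n) : Finset (Finset (Fin n)) :=
  Finset.univ.filter (fun x => i ∉ x ∧ x ∈ A)

/-- The value of a subset of `[n]` in the binary ordering. -/
def setToNat {n : ℕ} (x : Finset (Fin n)) : ℕ := ∑ i ∈ x, 2 ^ (i : ℕ)

/-- The initial segment of size `k` of the binary ordering on subsets of `[n]`
(for `k ≤ 2^n`). -/
def iseg (n k : ℕ) : Finset (Finset (Fin n)) :=
  Finset.univ.filter (fun x => setToNat x < k)

/-- `F k`: the number of hypercube edges induced by the initial segment of size `k`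
of the binary ordering; equals the sum of binary digit sums of `0, …, k-1`. -/
def binF (k : ℕ) : ℕ := ∑ i ∈ Finset.range k, (Nat.digits 2 i).sum

/-- The subcube of subsets of `[n]` contained in the first `d` coordinates. -/
def subcube (n d : ℕ) : Finset (Finset (Fin n)) :=
  Finset.univ.filter (fun x => ∀ i ∈ x, (i : ℕ) < d)


namespace AP

def sd (m : ℕ) : ℕ := (Nat.digits 2 m).sum

lemma binF_succ (m : ℕ) : binF (m+1) = binF m + sd m := by
  unfold binF sd; rw [Finset.sum_range_succ]

lemma sd_zero : sd 0 = 0 := by simp [sd]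

lemma binF_zero : binF 0 = 0 := by simp [binF]

lemma sd_step (m : ℕ) (hm : m ≠ 0) : sd m = m % 2 + sd (m / 2) := by
  unfold sd
  rw [Nat.digits_def' (by norm_num : (1:ℕ) < 2) (Nat.pos_of_ne_zero hm)]
  simp

lemma sd_even (m : ℕ) : sd (2*m) = sd m := by
  rcases Nat.eq_zero_or_pos m with h | h
  · simp [h]
  · rw [sd_step (2*m) (by omega)]
    have h1 : (2*m) % 2 = 0 := by omega
    have h2 : (2*m) / 2 = m := by omega
    rw [h1, h2]; omega

lemma sd_odd (m : ℕ) : sd (2*m+1) = sd m + 1 := by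
  rw [sd_step (2*m+1) (by omega)]
  have h1 : (2*m+1) % 2 = 1 := by omega
  have h2 : (2*m+1) / 2 = m := by omega
  rw [h1, h2]; omega

lemma sd_one : sd 1 = 1 := by
  have := sd_odd 0; simpa [sd_zero] using this

lemma binF_one : binF 1 = 0 := by
  have := binF_succ 0; simpa [binF_zero, sd_zero] using this

lemma sd_pow_add (P j : ℕ) (h : j < 2^P) : sd (2^P + j) = 1 + sd j := by
  induction P generalizing j with
  | zero =>
    interval_cases j
    simpa [sd_zero] using sd_one
  | succ P ih =>
    rcases Nat.even_or_odd j with ⟨j', hj'⟩ | ⟨j', hj'⟩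
    · have harg : 2^(P+1) + j = 2 * (2^P + j') := by subst hj'; ring
      rw [harg, sd_even, ih j' (by omega), hj']
      rw [show j' + j' = 2 * j' by ring, sd_even]
    · have harg : 2^(P+1) + j = 2 * (2^P + j') + 1 := by subst hj'; ring
      rw [harg, sd_odd, ih j' (by omega), hj', sd_odd]
      omega

lemma binF_pow_add (P z : ℕ) (hz : z ≤ 2^P) : binF (2^P + z) = binF (2^P) + z + binF z := by
  induction z with
  | zero => simp [binF_zero]
  | succ z ih =>
    have h1 : binF (2^P + (z+1)) = binF (2^P + z) + sd (2^P + z) := by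
      rw [show 2^P + (z+1) = (2^P + z) + 1 by ring, binF_succ]
    rw [h1, ih (by omega), sd_pow_add P z (by omega), binF_succ]
    omega

lemma binF_two_pow (P : ℕ) : 2 * binF (2^P) = P * 2^P := by
  induction P with
  | zero => simpa using binF_one
  | succ P ih =>
    have h1 : (2:ℕ)^(P+1) = 2^P + 2^P := by ring
    rw [h1, binF_pow_add P (2^P) le_rfl]
    have h2 : 2 * (binF (2^P) + 2^P + binF (2^P)) = 2*(2 * binF (2^P)) + 2*2^P := by ring
    rw [h2, ih]
    have h3 : (P+1) * (2^P + 2^P) = 2*(P*2^P) + 2*2^P := by ring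
    rw [h3]

lemma binF_reflect (P w : ℕ) (hw : w ≤ 2^P) :
    binF (2^P - w) + P * w = binF (2^P) + binF w := by
  induction P generalizing w with
  | zero =>
    interval_cases w
    · simp [binF_zero]
    · simp [binF_zero, binF_one]
  | succ P ih =>
    have hpow : (2:ℕ)^(P+1) = 2^P + 2^P := by ring
    rcases le_or_gt w (2^P) with hle | hlt
    · have harg : 2^(P+1) - w = 2^P + (2^P - w) := by omega
      rw [harg, binF_pow_add P (2^P - w) (by omega)]
      have hIH := ih w hle
      have hbig : binF (2^(P+1)) = 2 * binF (2^P) + 2^P := by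
        rw [hpow, binF_pow_add P (2^P) le_rfl]; ring
      have hm : (P+1) * w = P * w + w := by ring
      rw [hbig, hm]
      set a := binF (2^P - w)
      set b := binF (2^P)
      set c := binF w
      set pw := P * w
      omega
    · obtain ⟨u, hu⟩ : ∃ u, w = 2^P + u := ⟨w - 2^P, by omega⟩
      subst hu
      have hule : u ≤ 2^P := by omega
      have harg : 2^(P+1) - (2^P + u) = 2^P - u := by omega
      have hIH := ih u hule
      have hbw : binF (2^P + u) = binF (2^P) + u + binF u := binF_pow_add P u hule
      have hbig : binF (2^(P+1)) = 2 * binF (2^P) + 2^P := by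
        rw [hpow, binF_pow_add P (2^P) le_rfl]; ring
      have htp : 2 * binF (2^P) = P * 2^P := binF_two_pow P
      have hm : (P+1) * (2^P + u) = P * 2^P + 2^P + P * u + u := by ring
      rw [harg, hbig, hbw, hm]
      set a := binF (2^P - u)
      set b := binF (2^P)
      set c := binF u
      set pw := P * u
      set pp := P * 2^P
      omega

lemma hart_aux : ∀ N a b : ℕ, a + b = N → a ≤ b → binF a + binF b + a ≤ binF (a+b) := by
  intro N
  induction N using Nat.strong_induction_on with
  | _ N ihN =>
    intro a b hN hab
    rcases Nat.eq_zero_or_pos a with ha0 | ha1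
    · simp [ha0, binF_zero]
    have hN2 : 2 ≤ N := by omega
    obtain ⟨P, hp1, hp2⟩ : ∃ P, 2^P ≤ N ∧ N < 2^(P+1) :=
      ⟨Nat.log 2 N, Nat.pow_log_le_self 2 (by omega), Nat.lt_pow_succ_log_self (by norm_num) N⟩
    have hpowP : (2:ℕ)^(P+1) = 2^P + 2^P := by ring
    rcases le_or_gt (2^P) b with hb | hb
    · -- b >= half
      have h2 : a + (b - 2^P) ≤ 2^P := by omega
      have e1 : binF (a+b) = binF (2^P) + (a + (b - 2^P)) + binF (a + (b - 2^P)) := by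
        have h' := binF_pow_add P (a + (b - 2^P)) h2
        rw [show 2^P + (a + (b - 2^P)) = a + b by omega] at h'
        exact h'
      have e2 : binF b = binF (2^P) + (b - 2^P) + binF (b - 2^P) := by
        have h' := binF_pow_add P (b - 2^P) (by omega)
        rw [show 2^P + (b - 2^P) = b by omega] at h'
        exact h'
      have hIH : binF a + binF (b - 2^P) ≤ binF (a + (b - 2^P)) := by
        rcases le_total a (b - 2^P) with h | h
        · have := ihN (a + (b - 2^P)) (by omega) a (b - 2^P) rfl h; omega
        · have := ihN (a + (b - 2^P)) (by omega) (b - 2^P) a (by omega) h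
          rw [show (b - 2^P) + a = a + (b - 2^P) by ring] at this; omega
      omega
    · -- b < half
      rcases Nat.lt_or_ge (2^P) N with hstrict | hge
      · -- 2^P < N : reflection case
        have hsumlt : (2^P - a) + (2^P - b) < 2^P := by omega
        have r3 := binF_reflect P ((2^P - a) + (2^P - b)) (by omega)
        have e1 : binF (a+b) = binF (2^P) + (N - 2^P) + binF (2^P - ((2^P - a) + (2^P - b))) := by
          have h' := binF_pow_add P (N - 2^P) (by omega)
          rw [show 2^P + (N - 2^P) = N by omega] at h'
          rw [show N - 2^P = 2^P - ((2^P - a) + (2^P - b)) by omega] at h'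
          rw [hN]
          convert h' using 3
          omega
        have hIH : binF (2^P - b) + binF (2^P - a) + (2^P - b) ≤ binF ((2^P - a) + (2^P - b)) := by
          have := ihN ((2^P - a) + (2^P - b)) (by omega) (2^P - b) (2^P - a) (by ring) (by omega)
          rw [show (2^P - b) + (2^P - a) = (2^P - a) + (2^P - b) by ring] at this
          omega
        have r1' : binF a + P * (2^P - a) = binF (2^P) + binF (2^P - a) := by
          have := binF_reflect P (2^P - a) (by omega)
          rw [show 2^P - (2^P - a) = a by omega] at this
          exact this
        have r2' : binF b + P * (2^P - b) = binF (2^P) + binF (2^P - b) := by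
          have := binF_reflect P (2^P - b) (by omega)
          rw [show 2^P - (2^P - b) = b by omega] at this
          exact this
        have hmul : P * ((2^P - a) + (2^P - b)) = P * (2^P - a) + P * (2^P - b) := by ring
        rw [hmul] at r3
        set x1 := binF a; set x2 := binF b
        set x3 := binF (2^P - a); set x4 := binF (2^P - b)
        set x5 := binF ((2^P - a) + (2^P - b))
        set x6 := binF (2^P - ((2^P - a) + (2^P - b)))
        set x7 := binF (2^P)
        set m1 := P * (2^P - a); set m2 := P * (2^P - b)
        omega
      · -- N = 2^P exactly
        have hNeq : N = 2^P := by omega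
        have hP1 : 1 ≤ P := by
          by_contra h
          have hp0 : P = 0 := by omega
          rw [hp0] at hNeq; omega
        have hHH : 2^(P-1) + 2^(P-1) = 2^P := by
          have e : (2:ℕ)^(P-1+1) = 2^(P-1)*2 := pow_succ 2 (P-1)
          rw [show P-1+1 = P by omega] at e
          omega
        have hbH : 2^(P-1) ≤ b := by omega
        have hab2 : a + (b - 2^(P-1)) = 2^(P-1) := by omega
        have e2 : binF b = binF (2^(P-1)) + (b - 2^(P-1)) + binF (b - 2^(P-1)) := by
          have h' := binF_pow_add (P-1) (b - 2^(P-1)) (by omega)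
          rw [show 2^(P-1) + (b - 2^(P-1)) = b by omega] at h'
          exact h'
        have eN : binF (a+b) = binF (2^(P-1)) + 2^(P-1) + binF (2^(P-1)) := by
          have h' := binF_pow_add (P-1) (2^(P-1)) le_rfl
          rw [show 2^(P-1) + 2^(P-1) = N by omega] at h'
          rw [hN]
          exact h'
        have hIH : binF a + binF (b - 2^(P-1)) ≤ binF (2^(P-1)) := by
          rcases le_total a (b - 2^(P-1)) with h | h
          · have := ihN (2^(P-1)) (by omega) a (b - 2^(P-1)) hab2 h
            rw [hab2] at this; omega
          · have := ihN (2^(P-1)) (by omega) (b - 2^(P-1)) a (by omega) h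
            rw [show (b - 2^(P-1)) + a = a + (b - 2^(P-1)) by ring, hab2] at this; omega
        omega

lemma hart (a b : ℕ) : binF a + binF b + min a b ≤ binF (a+b) := by
  rcases le_total a b with h | h
  · have := hart_aux (a+b) a b rfl h
    have hm : min a b = a := min_eq_left h
    omega
  · have := hart_aux (a+b) b a (by ring) h
    have hm : min a b = b := min_eq_right h
    rw [show b + a = a + b by ring] at this
    omega



variable {n : ℕ}

/-- ordered pairs at Hamming distance 1 inside S -/
def DD (S : Finset (Finset (Fin n))) : ℕ := edgesBetween S S

/-- matching count: elements whose G-complement is also in S -/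
def MM (G : Finset (Fin n)) (S : Finset (Finset (Fin n))) : ℕ :=
  (S.filter (fun x => G \ x ∈ S)).card

/-- cross beta count -/
def crossB (G : Finset (Fin n)) (X Y : Finset (Finset (Fin n))) : ℕ :=
  (X.filter (fun x => G \ x ∈ Y)).card

/-- number of neighbours of x inside T -/
def dg (T : Finset (Finset (Fin n))) (x : Finset (Fin n)) : ℕ :=
  (T.filter (fun y => (symmDiff x y).card = 1)).card

lemma EB_eq_sum (X Y : Finset (Finset (Fin n))) :
    edgesBetween X Y = ∑ x ∈ X, dg Y x := by
  unfold edgesBetween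
  rw [Finset.card_eq_sum_card_fiberwise
    (f := Prod.fst) (t := X)
    (fun p hp => (Finset.mem_product.1 (Finset.mem_filter.1 hp).1).1)]
  refine Finset.sum_congr rfl (fun x hx => ?_)
  unfold dg
  apply Finset.card_bij (fun p _ => p.2)
  · intro p hp
    simp only [Finset.mem_filter] at hp ⊢
    obtain ⟨⟨hp1, hp2⟩, hpx⟩ := hp
    have := Finset.mem_product.1 hp1
    refine ⟨this.2, ?_⟩
    rw [← hpx]; exact hp2
  · intro p hp q hq hpq
    simp only [Finset.mem_filter] at hp hq
    obtain ⟨_, hpx⟩ := hp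
    obtain ⟨_, hqx⟩ := hq
    exact Prod.ext (hpx.trans hqx.symm) hpq
  · intro y hy
    rw [Finset.mem_filter] at hy
    refine ⟨(x, y), ?_, rfl⟩
    exact Finset.mem_filter.2 ⟨Finset.mem_filter.2 ⟨Finset.mem_product.2 ⟨hx, hy.1⟩, hy.2⟩, rfl⟩

lemma DD_eq_sum (S : Finset (Finset (Fin n))) : DD S = ∑ x ∈ S, dg S x :=
  EB_eq_sum S S

lemma EB_swap (X Y : Finset (Finset (Fin n))) : edgesBetween X Y = edgesBetween Y X := by
  unfold edgesBetween
  apply Finset.card_bij (fun p _ => p.swap)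
  · intro p hp
    simp only [Finset.mem_filter, Finset.mem_product] at hp ⊢
    refine ⟨⟨hp.1.2, hp.1.1⟩, ?_⟩
    rw [Prod.fst_swap, Prod.snd_swap, symmDiff_comm]
    exact hp.2
  · intro p _ q _ hpq
    exact Prod.swap_injective hpq
  · intro p hp
    simp only [Finset.mem_filter, Finset.mem_product] at hp
    refine ⟨p.swap, ?_, Prod.swap_swap p⟩
    simp only [Finset.mem_filter, Finset.mem_product, Prod.fst_swap, Prod.snd_swap]
    refine ⟨⟨hp.1.2, hp.1.1⟩, ?_⟩
    rw [symmDiff_comm]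
    exact hp.2

lemma DD_subsingleton (S : Finset (Finset (Fin n))) (hS : S.card ≤ 1) : DD S = 0 := by
  unfold DD edgesBetween
  rw [Finset.card_eq_zero, Finset.filter_eq_empty_iff]
  intro p hp
  have h := Finset.mem_product.1 hp
  have : p.1 = p.2 := Finset.card_le_one.1 hS p.1 h.1 p.2 h.2
  rw [this, symmDiff_self]
  simp

/-- number of neighbours of x inside the powerset of G equals |G| -/
lemma nbr_count (G x : Finset (Fin n)) (hx : x ⊆ G) : dg G.powerset x = G.card := by
  unfold dg
  symm
  apply Finset.card_bij (fun j _ => symmDiff x {j})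
  · intro j hj
    simp only [Finset.mem_filter, Finset.mem_powerset]
    constructor
    · intro a ha
      rw [Finset.mem_symmDiff] at ha
      rcases ha with ⟨ha, _⟩ | ⟨ha, _⟩
      · exact hx ha
      · rw [Finset.mem_singleton] at ha; rw [ha]; exact hj
    · rw [symmDiff_symmDiff_cancel_left]
      simp
  · intro j1 h1 j2 h2 heq
    have := symmDiff_right_injective x heq
    simpa using this
  · intro y hy
    simp only [Finset.mem_filter, Finset.mem_powerset] at hy
    obtain ⟨hsub, hcard⟩ := hy
    obtain ⟨j, hj⟩ := Finset.card_eq_one.1 hcard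
    have hjG : j ∈ G := by
      have : j ∈ symmDiff x y := by rw [hj]; simp
      rw [Finset.mem_symmDiff] at this
      rcases this with ⟨h, _⟩ | ⟨h, _⟩
      · exact hx h
      · exact hsub h
    refine ⟨j, hjG, ?_⟩
    rw [← hj, symmDiff_symmDiff_cancel_left]

/-- DD is invariant under injections preserving symmDiff -/
lemma DD_image (f : Finset (Fin n) → Finset (Fin n)) (S : Finset (Finset (Fin n)))
    (hinj : Set.InjOn f S)
    (hsym : ∀ x ∈ S, ∀ y ∈ S, (symmDiff (f x) (f y)).card = (symmDiff x y).card) :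
    DD (S.image f) = DD S := by
  unfold DD edgesBetween
  symm
  apply Finset.card_bij (fun p _ => (f p.1, f p.2))
  · intro p hp
    simp only [Finset.mem_filter, Finset.mem_product] at hp ⊢
    obtain ⟨⟨h1, h2⟩, h3⟩ := hp
    exact ⟨⟨Finset.mem_image_of_mem f h1, Finset.mem_image_of_mem f h2⟩,
      by rw [hsym p.1 h1 p.2 h2]; exact h3⟩
  · intro p hp q hq heq
    simp only [Finset.mem_filter, Finset.mem_product] at hp hq
    have h1 := congrArg Prod.fst heq
    have h2 := congrArg Prod.snd heq
    simp only at h1 h2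
    exact Prod.ext (hinj hp.1.1 hq.1.1 h1) (hinj hp.1.2 hq.1.2 h2)
  · intro q hq
    simp only [Finset.mem_filter, Finset.mem_product, Finset.mem_image] at hq
    obtain ⟨⟨⟨a, ha, ha'⟩, ⟨b, hb, hb'⟩⟩, hcard⟩ := hq
    refine ⟨(a, b), ?_, ?_⟩
    · simp only [Finset.mem_filter, Finset.mem_product]
      refine ⟨⟨ha, hb⟩, ?_⟩
      rw [← hsym a ha b hb, ha', hb']
      exact hcard
    · rw [ha', hb']


-- ====== part 3 ======

lemma symmDiff_singleton_not_mem {x : Finset (Fin n)} {i : Fin n} (h : i ∉ x) :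
    symmDiff x {i} = insert i x := by
  ext a
  simp only [Finset.mem_symmDiff, Finset.mem_singleton, Finset.mem_insert]
  by_cases hai : a = i
  · subst hai; simp [h]
  · simp [hai]

lemma symmDiff_singleton_mem {x : Finset (Fin n)} {i : Fin n} (h : i ∈ x) :
    symmDiff x {i} = x.erase i := by
  ext a
  simp only [Finset.mem_symmDiff, Finset.mem_singleton, Finset.mem_erase]
  by_cases hai : a = i
  · subst hai; simp [h]
  · simp [hai]

lemma symmDiff_erase_erase {x y : Finset (Fin n)} {i : Fin n} (hx : i ∈ x) (hy : i ∈ y) :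
    symmDiff (x.erase i) (y.erase i) = symmDiff x y := by
  ext a
  simp only [Finset.mem_symmDiff, Finset.mem_erase]
  by_cases hai : a = i
  · subst hai; simp [hx, hy]
  · simp [hai]

def SX (i : Fin n) (S : Finset (Finset (Fin n))) : Finset (Finset (Fin n)) :=
  S.filter (fun x => i ∉ x)

def SYr (i : Fin n) (S : Finset (Finset (Fin n))) : Finset (Finset (Fin n)) :=
  S.filter (fun x => i ∈ x)

def SY (i : Fin n) (S : Finset (Finset (Fin n))) : Finset (Finset (Fin n)) :=
  (SYr i S).image (fun x => x.erase i)

lemma mem_SX {i : Fin n} {S : Finset (Finset (Fin n))} {x : Finset (Fin n)} :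
    x ∈ SX i S ↔ x ∈ S ∧ i ∉ x := Finset.mem_filter

lemma mem_SY {i : Fin n} {S : Finset (Finset (Fin n))} {z : Finset (Fin n)} :
    z ∈ SY i S ↔ i ∉ z ∧ insert i z ∈ S := by
  constructor
  · intro hz
    obtain ⟨x, hx, rfl⟩ := Finset.mem_image.1 hz
    rw [SYr, Finset.mem_filter] at hx
    exact ⟨Finset.notMem_erase i x, by rw [Finset.insert_erase hx.2]; exact hx.1⟩
  · rintro ⟨h1, h2⟩
    exact Finset.mem_image.2 ⟨insert i z, Finset.mem_filter.2 ⟨h2, Finset.mem_insert_self i z⟩,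
      Finset.erase_insert h1⟩

lemma SX_sub {G : Finset (Fin n)} {i : Fin n} {S : Finset (Finset (Fin n))}
    (hS : S ⊆ G.powerset) : SX i S ⊆ (G.erase i).powerset := by
  intro x hx
  rw [mem_SX] at hx
  rw [Finset.mem_powerset, Finset.subset_erase]
  exact ⟨Finset.mem_powerset.1 (hS hx.1), hx.2⟩

lemma SY_sub {G : Finset (Fin n)} {i : Fin n} {S : Finset (Finset (Fin n))}
    (hS : S ⊆ G.powerset) : SY i S ⊆ (G.erase i).powerset := by
  intro z hz
  rw [mem_SY] at hz
  rw [Finset.mem_powerset, Finset.subset_erase]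
  have h1 : insert i z ⊆ G := Finset.mem_powerset.1 (hS hz.2)
  exact ⟨fun a ha => h1 (Finset.mem_insert_of_mem ha), hz.1⟩

lemma disj_SX_SYr (i : Fin n) (S : Finset (Finset (Fin n))) : Disjoint (SX i S) (SYr i S) := by
  rw [Finset.disjoint_left]
  intro x hx hx'
  rw [mem_SX] at hx
  rw [SYr, Finset.mem_filter] at hx'
  exact hx.2 hx'.2

lemma union_SX_SYr (i : Fin n) (S : Finset (Finset (Fin n))) : SX i S ∪ SYr i S = S := by
  rw [SX, SYr]
  rw [Finset.union_comm]
  exact Finset.filter_union_filter_not_eq (fun x => i ∈ x) S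

lemma card_SY (i : Fin n) (S : Finset (Finset (Fin n))) : (SY i S).card = (SYr i S).card := by
  apply Finset.card_image_of_injOn
  intro x hx y hy hxy
  rw [Finset.mem_coe, SYr, Finset.mem_filter] at hx hy
  have hxy' : x.erase i = y.erase i := hxy
  rw [← Finset.insert_erase hx.2, ← Finset.insert_erase hy.2, hxy']

lemma card_split (i : Fin n) (S : Finset (Finset (Fin n))) :
    (SX i S).card + (SY i S).card = S.card := by
  rw [card_SY]
  have := Finset.card_filter_add_card_filter_not (s := S) (p := fun x => i ∈ x)
  rw [SX, SYr]
  omega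

lemma dg_union (T1 T2 : Finset (Finset (Fin n))) (x : Finset (Fin n)) (h : Disjoint T1 T2) :
    dg (T1 ∪ T2) x = dg T1 x + dg T2 x := by
  unfold dg
  rw [Finset.filter_union, Finset.card_union_of_disjoint (Finset.disjoint_filter_filter h)]

lemma dg_up {i : Fin n} {S : Finset (Finset (Fin n))} (x : Finset (Fin n)) (hx : i ∉ x) :
    dg (SYr i S) x = if insert i x ∈ S then 1 else 0 := by
  unfold dg
  have hset : (SYr i S).filter (fun y => (symmDiff x y).card = 1)
      = if insert i x ∈ S then {insert i x} else ∅ := by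
    ext y
    rw [Finset.mem_filter, SYr, Finset.mem_filter]
    constructor
    · rintro ⟨⟨hyS, hyi⟩, hcard⟩
      obtain ⟨j, hj⟩ := Finset.card_eq_one.1 hcard
      have hij : i = j := by
        have hiin : i ∈ symmDiff x y := by
          rw [Finset.mem_symmDiff]; right; exact ⟨hyi, hx⟩
        rw [hj] at hiin; simpa using hiin
      have hy_eq : y = insert i x := by
        have h2 := symmDiff_symmDiff_cancel_left x y
        rw [hj, ← hij, symmDiff_singleton_not_mem hx] at h2
        exact h2.symm
      rw [hy_eq] at hyS
      rw [if_pos hyS]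
      rw [hy_eq]
      exact Finset.mem_singleton_self _
    · intro hy
      by_cases hins : insert i x ∈ S
      · rw [if_pos hins] at hy
        rw [Finset.mem_singleton] at hy
        subst hy
        refine ⟨⟨hins, Finset.mem_insert_self i x⟩, ?_⟩
        rw [show symmDiff x (insert i x) = symmDiff x (symmDiff x {i}) by
          rw [symmDiff_singleton_not_mem hx]]
        rw [symmDiff_symmDiff_cancel_left]
        simp
      · rw [if_neg hins] at hy
        exact absurd hy (Finset.notMem_empty y)
  rw [hset]
  split_ifs <;> simp

lemma dg_down {i : Fin n} {S : Finset (Finset (Fin n))} (x : Finset (Fin n)) (hx : i ∈ x) :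
    dg (SX i S) x = if x.erase i ∈ S then 1 else 0 := by
  unfold dg
  have hset : (SX i S).filter (fun y => (symmDiff x y).card = 1)
      = if x.erase i ∈ S then {x.erase i} else ∅ := by
    ext y
    rw [Finset.mem_filter, mem_SX]
    constructor
    · rintro ⟨⟨hyS, hyi⟩, hcard⟩
      obtain ⟨j, hj⟩ := Finset.card_eq_one.1 hcard
      have hij : i = j := by
        have hiin : i ∈ symmDiff x y := by
          rw [Finset.mem_symmDiff]; left; exact ⟨hx, hyi⟩
        rw [hj] at hiin; simpa using hiin
      have hy_eq : y = x.erase i := by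
        have h2 := symmDiff_symmDiff_cancel_left x y
        rw [hj, ← hij, symmDiff_singleton_mem hx] at h2
        exact h2.symm
      rw [hy_eq] at hyS
      rw [if_pos hyS]
      rw [hy_eq]
      exact Finset.mem_singleton_self _
    · intro hy
      by_cases hdel : x.erase i ∈ S
      · rw [if_pos hdel] at hy
        rw [Finset.mem_singleton] at hy
        subst hy
        refine ⟨⟨hdel, Finset.notMem_erase i x⟩, ?_⟩
        rw [show symmDiff x (x.erase i) = symmDiff x (symmDiff x {i}) by
          rw [symmDiff_singleton_mem hx]]
        rw [symmDiff_symmDiff_cancel_left]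
        simp
      · rw [if_neg hdel] at hy
        exact absurd hy (Finset.notMem_empty y)
  rw [hset]
  split_ifs <;> simp

lemma DD_SYr_eq (i : Fin n) (S : Finset (Finset (Fin n))) : DD (SY i S) = DD (SYr i S) := by
  apply DD_image
  · intro x hx y hy hxy
    rw [Finset.mem_coe, SYr, Finset.mem_filter] at hx hy
    have hxy' : x.erase i = y.erase i := hxy
    rw [← Finset.insert_erase hx.2, ← Finset.insert_erase hy.2, hxy']
  · intro x hx y hy
    rw [SYr, Finset.mem_filter] at hx hy
    rw [symmDiff_erase_erase hx.2 hy.2]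

lemma DD_split (i : Fin n) (S : Finset (Finset (Fin n))) :
    DD S = DD (SX i S) + DD (SY i S) + 2 * ((SX i S) ∩ (SY i S)).card := by
  have hdisj := disj_SX_SYr i S
  have huni := union_SX_SYr i S
  have hsum : DD S = ∑ x ∈ SX i S, dg S x + ∑ x ∈ SYr i S, dg S x := by
    rw [DD_eq_sum]
    have h := Finset.sum_union (f := fun x => dg S x) hdisj
    rw [huni] at h
    exact h
  have hdgX : ∀ x ∈ SX i S, dg S x = dg (SX i S) x + (if insert i x ∈ S then 1 else 0) := by
    intro x hx
    rw [mem_SX] at hx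
    conv_lhs => rw [← huni]
    rw [dg_union _ _ _ hdisj, dg_up x hx.2]
  have hdgY : ∀ x ∈ SYr i S, dg S x = dg (SYr i S) x + (if x.erase i ∈ S then 1 else 0) := by
    intro x hx
    rw [SYr, Finset.mem_filter] at hx
    conv_lhs => rw [← huni]
    rw [dg_union _ _ _ hdisj, dg_down x hx.2]
    omega
  have hX : ∑ x ∈ SX i S, dg S x = DD (SX i S) + ((SX i S).filter (fun x => insert i x ∈ S)).card := by
    rw [Finset.sum_congr rfl hdgX, Finset.sum_add_distrib, ← DD_eq_sum]
    congr 1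
    rw [Finset.card_filter]
  have hY : ∑ x ∈ SYr i S, dg S x = DD (SY i S) + ((SYr i S).filter (fun x => x.erase i ∈ S)).card := by
    rw [Finset.sum_congr rfl hdgY, Finset.sum_add_distrib, ← DD_eq_sum, DD_SYr_eq]
    congr 1
    rw [Finset.card_filter]
  have hc1 : (SX i S).filter (fun x => insert i x ∈ S) = (SX i S) ∩ (SY i S) := by
    ext z
    rw [Finset.mem_filter, Finset.mem_inter, mem_SX, mem_SY]
    constructor
    · rintro ⟨⟨h1, h2⟩, h3⟩; exact ⟨⟨h1, h2⟩, h2, h3⟩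
    · rintro ⟨⟨h1, h2⟩, _, h4⟩; exact ⟨⟨h1, h2⟩, h4⟩
  have hc2 : ((SYr i S).filter (fun x => x.erase i ∈ S)).card = ((SX i S) ∩ (SY i S)).card := by
    apply Finset.card_bij (fun x _ => x.erase i)
    · intro x hx
      rw [Finset.mem_filter, SYr, Finset.mem_filter] at hx
      rw [Finset.mem_inter, mem_SX, mem_SY]
      refine ⟨⟨hx.2, Finset.notMem_erase i x⟩, Finset.notMem_erase i x, ?_⟩
      rw [Finset.insert_erase hx.1.2]
      exact hx.1.1
    · intro x hx y hy hxy
      rw [Finset.mem_filter, SYr, Finset.mem_filter] at hx hy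
      have hxy' : x.erase i = y.erase i := hxy
      rw [← Finset.insert_erase hx.1.2, ← Finset.insert_erase hy.1.2, hxy']
    · intro z hz
      rw [Finset.mem_inter, mem_SX, mem_SY] at hz
      refine ⟨insert i z, ?_, Finset.erase_insert hz.1.2⟩
      rw [Finset.mem_filter, SYr, Finset.mem_filter]
      refine ⟨⟨hz.2.2, Finset.mem_insert_self i z⟩, ?_⟩
      rw [Finset.erase_insert hz.1.2]
      exact hz.1.1
  rw [hsum, hX, hY, hc1, hc2]
  omega

lemma crossB_comm (G' : Finset (Fin n)) (X Y : Finset (Finset (Fin n)))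
    (hX : X ⊆ G'.powerset) (hY : Y ⊆ G'.powerset) : crossB G' X Y = crossB G' Y X := by
  unfold crossB
  apply Finset.card_bij (fun x _ => G' \ x)
  · intro x hx
    rw [Finset.mem_filter] at hx
    rw [Finset.mem_filter]
    refine ⟨hx.2, ?_⟩
    rw [Finset.sdiff_sdiff_eq_self (Finset.mem_powerset.1 (hX hx.1))]
    exact hx.1
  · intro x hx y hy hxy
    rw [Finset.mem_filter] at hx hy
    have h1 := Finset.sdiff_sdiff_eq_self (Finset.mem_powerset.1 (hX hx.1))
    have h2 := Finset.sdiff_sdiff_eq_self (Finset.mem_powerset.1 (hX hy.1))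
    rw [← h1, ← h2, hxy]
  · intro y hy
    rw [Finset.mem_filter] at hy
    refine ⟨G' \ y, ?_, Finset.sdiff_sdiff_eq_self (Finset.mem_powerset.1 (hY hy.1))⟩
    rw [Finset.mem_filter]
    refine ⟨hy.2, ?_⟩
    rw [Finset.sdiff_sdiff_eq_self (Finset.mem_powerset.1 (hY hy.1))]
    exact hy.1

lemma MM_split (G : Finset (Fin n)) (i : Fin n) (S : Finset (Finset (Fin n)))
    (hi : i ∈ G) (hS : S ⊆ G.powerset) :
    MM G S = 2 * crossB (G.erase i) (SX i S) (SY i S) := by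
  have hdisj := disj_SX_SYr i S
  have huni := union_SX_SYr i S
  have hMM : MM G S = ((SX i S).filter (fun x => G \ x ∈ S)).card
      + ((SYr i S).filter (fun x => G \ x ∈ S)).card := by
    have hfu := Finset.filter_union (fun x => G \ x ∈ S) (SX i S) (SYr i S)
    rw [huni] at hfu
    unfold MM
    rw [hfu, Finset.card_union_of_disjoint (Finset.disjoint_filter_filter hdisj)]
  have hX : (SX i S).filter (fun x => G \ x ∈ S) = (SX i S).filter (fun x => (G.erase i) \ x ∈ (SY i S)) := by
    apply Finset.filter_congr
    intro x hx
    rw [mem_SX] at hx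
    have hkey : insert i ((G.erase i) \ x) = G \ x := by
      ext a
      simp only [Finset.mem_insert, Finset.mem_sdiff, Finset.mem_erase]
      by_cases hai : a = i
      · subst hai; simp [hi, hx.2]
      · simp [hai]
    constructor
    · intro hGx
      rw [mem_SY]
      refine ⟨fun h => (Finset.notMem_erase i G) (Finset.mem_sdiff.1 h).1, ?_⟩
      rw [hkey]; exact hGx
    · intro hmem
      rw [mem_SY] at hmem
      rw [← hkey]; exact hmem.2
  have hYcard : ((SYr i S).filter (fun x => G \ x ∈ S)).card
      = ((SY i S).filter (fun z => (G.erase i) \ z ∈ (SX i S))).card := by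
    apply Finset.card_bij (fun x _ => x.erase i)
    · intro x hx
      rw [Finset.mem_filter, SYr, Finset.mem_filter] at hx
      obtain ⟨⟨hxS, hxi⟩, hGx⟩ := hx
      have hkey : G \ x = (G.erase i) \ (x.erase i) := by
        ext a
        simp only [Finset.mem_sdiff, Finset.mem_erase]
        by_cases hai : a = i
        · subst hai; simp [hxi]
        · simp [hai]
      rw [Finset.mem_filter]
      constructor
      · rw [mem_SY]
        refine ⟨Finset.notMem_erase i x, ?_⟩
        rw [Finset.insert_erase hxi]; exact hxS
      · rw [mem_SX, ← hkey]
        refine ⟨hGx, ?_⟩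
        rw [hkey]
        simp [Finset.mem_sdiff, hxi]
    · intro x hx y hy hxy
      rw [Finset.mem_filter, SYr, Finset.mem_filter] at hx hy
      have hxy' : x.erase i = y.erase i := hxy
      rw [← Finset.insert_erase hx.1.2, ← Finset.insert_erase hy.1.2, hxy']
    · intro z hz
      rw [Finset.mem_filter, mem_SY] at hz
      obtain ⟨⟨hzi, hzS⟩, hzX⟩ := hz
      refine ⟨insert i z, ?_, Finset.erase_insert hzi⟩
      rw [Finset.mem_filter, SYr, Finset.mem_filter]
      refine ⟨⟨hzS, Finset.mem_insert_self i z⟩, ?_⟩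
      have hkey : G \ (insert i z) = (G.erase i) \ z := by
        ext a
        simp only [Finset.mem_sdiff, Finset.mem_erase, Finset.mem_insert]
        by_cases hai : a = i
        · subst hai; simp
        · simp [hai]
      rw [hkey]
      rw [mem_SX] at hzX
      exact hzX.1
  have hcomm : crossB (G.erase i) (SY i S) (SX i S) = crossB (G.erase i) (SX i S) (SY i S) :=
    crossB_comm _ _ _ (SY_sub hS) (SX_sub hS)
  rw [hMM, hX, hYcard]
  unfold crossB at hcomm ⊢
  omega


-- ====== part 4 ======

def bim (G' : Finset (Fin n)) (Y : Finset (Finset (Fin n))) : Finset (Finset (Fin n)) :=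
  Y.image (fun y => G' \ y)

lemma mem_bim {G' : Finset (Fin n)} {Y : Finset (Finset (Fin n))} (hY : Y ⊆ G'.powerset)
    {z : Finset (Fin n)} : z ∈ bim G' Y ↔ z ⊆ G' ∧ G' \ z ∈ Y := by
  constructor
  · intro hz
    obtain ⟨y, hy, rfl⟩ := Finset.mem_image.1 hz
    refine ⟨Finset.sdiff_subset, ?_⟩
    rw [Finset.sdiff_sdiff_eq_self (Finset.mem_powerset.1 (hY hy))]
    exact hy
  · rintro ⟨h1, h2⟩
    exact Finset.mem_image.2 ⟨G' \ z, h2, Finset.sdiff_sdiff_eq_self h1⟩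

lemma bim_sub {G' : Finset (Fin n)} {Y : Finset (Finset (Fin n))} :
    bim G' Y ⊆ G'.powerset := by
  intro z hz
  obtain ⟨y, _, rfl⟩ := Finset.mem_image.1 hz
  exact Finset.mem_powerset.2 Finset.sdiff_subset

lemma card_bim {G' : Finset (Fin n)} {Y : Finset (Finset (Fin n))} (hY : Y ⊆ G'.powerset) :
    (bim G' Y).card = Y.card := by
  apply Finset.card_image_of_injOn
  intro x hx y hy hxy
  have hxy' : G' \ x = G' \ y := hxy
  have h1 := Finset.sdiff_sdiff_eq_self (Finset.mem_powerset.1 (hY hx))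
  have h2 := Finset.sdiff_sdiff_eq_self (Finset.mem_powerset.1 (hY hy))
  rw [← h1, ← h2, hxy']

lemma bim_bim {G' : Finset (Fin n)} {Y : Finset (Finset (Fin n))} (hY : Y ⊆ G'.powerset) :
    bim G' (bim G' Y) = Y := by
  ext z
  rw [mem_bim (bim_sub), ]
  constructor
  · rintro ⟨h1, h2⟩
    rw [mem_bim hY] at h2
    rw [← Finset.sdiff_sdiff_eq_self h1]
    exact h2.2
  · intro hz
    refine ⟨Finset.mem_powerset.1 (hY hz), ?_⟩
    rw [mem_bim hY]
    refine ⟨Finset.sdiff_subset, ?_⟩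
    rw [Finset.sdiff_sdiff_eq_self (Finset.mem_powerset.1 (hY hz))]
    exact hz

lemma inter_bim {G' : Finset (Fin n)} {X Y : Finset (Finset (Fin n))}
    (hX : X ⊆ G'.powerset) (hY : Y ⊆ G'.powerset) :
    X ∩ bim G' Y = X.filter (fun x => G' \ x ∈ Y) := by
  ext z
  rw [Finset.mem_inter, Finset.mem_filter, mem_bim hY]
  constructor
  · rintro ⟨h1, _, h3⟩; exact ⟨h1, h3⟩
  · rintro ⟨h1, h2⟩; exact ⟨h1, Finset.mem_powerset.1 (hX h1), h2⟩

lemma card_inter_bim {G' : Finset (Fin n)} {X Y : Finset (Finset (Fin n))}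
    (hX : X ⊆ G'.powerset) (hY : Y ⊆ G'.powerset) :
    (X ∩ bim G' Y).card = crossB G' X Y := by
  rw [inter_bim hX hY]; rfl

lemma MM_eq_inter {G' : Finset (Fin n)} {Y : Finset (Finset (Fin n))} (hY : Y ⊆ G'.powerset) :
    MM G' Y = (Y ∩ bim G' Y).card := by
  rw [card_inter_bim hY hY]; rfl

lemma key1 {G' : Finset (Fin n)} {X Y : Finset (Finset (Fin n))}
    (hX : X ⊆ G'.powerset) (hY : Y ⊆ G'.powerset) :
    (X ∩ Y).card + crossB G' X Y ≤ X.card + (X ∩ (Y ∩ bim G' Y)).card := by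
  rw [← card_inter_bim hX hY]
  have h1 := Finset.card_inter_add_card_union (X ∩ Y) (X ∩ bim G' Y)
  have h2 : (X ∩ Y) ∩ (X ∩ bim G' Y) = X ∩ (Y ∩ bim G' Y) := by
    ext z
    simp only [Finset.mem_inter]
    tauto
  have h3 : (X ∩ Y) ∪ (X ∩ bim G' Y) ⊆ X := by
    intro z hz
    rcases Finset.mem_union.1 hz with h | h
    · exact (Finset.mem_inter.1 h).1
    · exact (Finset.mem_inter.1 h).1
  have h4 := Finset.card_le_card h3
  rw [h2] at h1
  omega

lemma key2 {G' : Finset (Fin n)} {X Y : Finset (Finset (Fin n))}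
    (hX : X ⊆ G'.powerset) (hY : Y ⊆ G'.powerset) :
    2 * (X ∩ (Y ∩ bim G' Y)).card ≤ (Y ∩ bim G' Y).card + (X ∩ bim G' X).card := by
  have hq2 : (bim G' X ∩ (Y ∩ bim G' Y)).card = (X ∩ (Y ∩ bim G' Y)).card := by
    symm
    apply Finset.card_bij (fun x _ => G' \ x)
    · intro x hx
      simp only [Finset.mem_inter] at hx ⊢
      obtain ⟨hx1, hx2, hx3⟩ := hx
      have hxG : x ⊆ G' := Finset.mem_powerset.1 (hX hx1)
      refine ⟨Finset.mem_image_of_mem _ hx1, ?_, ?_⟩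
      · rw [mem_bim hY] at hx3
        exact hx3.2
      · rw [mem_bim hY]
        exact ⟨Finset.sdiff_subset, by rw [Finset.sdiff_sdiff_eq_self hxG]; exact hx2⟩
    · intro x hx y hy hxy
      simp only [Finset.mem_inter] at hx hy
      have hxy' : G' \ x = G' \ y := hxy
      have h1 := Finset.sdiff_sdiff_eq_self (Finset.mem_powerset.1 (hX hx.1))
      have h2 := Finset.sdiff_sdiff_eq_self (Finset.mem_powerset.1 (hX hy.1))
      rw [← h1, ← h2, hxy']
    · intro z hz
      simp only [Finset.mem_inter] at hz
      obtain ⟨hz1, hz2, hz3⟩ := hz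
      rw [mem_bim hX] at hz1
      refine ⟨G' \ z, ?_, Finset.sdiff_sdiff_eq_self hz1.1⟩
      simp only [Finset.mem_inter]
      rw [mem_bim hY] at hz3
      refine ⟨hz1.2, hz3.2, ?_⟩
      rw [mem_bim hY]
      refine ⟨Finset.sdiff_subset, ?_⟩
      rw [Finset.sdiff_sdiff_eq_self hz1.1]
      exact hz2
  have h1 := Finset.card_union_add_card_inter (X ∩ (Y ∩ bim G' Y)) (bim G' X ∩ (Y ∩ bim G' Y))
  have h2 : (X ∩ (Y ∩ bim G' Y)) ∪ (bim G' X ∩ (Y ∩ bim G' Y)) ⊆ Y ∩ bim G' Y := by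
    intro z hz
    rcases Finset.mem_union.1 hz with h | h
    · exact (Finset.mem_inter.1 h).2
    · exact (Finset.mem_inter.1 h).2
  have h3 : (X ∩ (Y ∩ bim G' Y)) ∩ (bim G' X ∩ (Y ∩ bim G' Y)) ⊆ X ∩ bim G' X := by
    intro z hz
    simp only [Finset.mem_inter] at hz
    exact Finset.mem_inter.2 ⟨hz.1.1, hz.2.1⟩
  have h4 := Finset.card_le_card h2
  have h5 := Finset.card_le_card h3
  omega

lemma reg {G' : Finset (Fin n)} {Y : Finset (Finset (Fin n))} (hY : Y ⊆ G'.powerset) :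
    DD Y + edgesBetween Y (G'.powerset \ Y) = G'.card * Y.card := by
  rw [DD_eq_sum, EB_eq_sum, ← Finset.sum_add_distrib]
  have hstep : ∀ x ∈ Y, dg Y x + dg (G'.powerset \ Y) x = G'.card := by
    intro x hx
    rw [← dg_union _ _ _ Finset.disjoint_sdiff, Finset.union_sdiff_of_subset hY]
    exact nbr_count G' x (Finset.mem_powerset.1 (hY hx))
  rw [Finset.sum_congr rfl hstep, Finset.sum_const, smul_eq_mul, mul_comm]

theorem harper : ∀ (g : ℕ) (G : Finset (Fin n)), G.card = g →
    ∀ S, S ⊆ G.powerset → DD S ≤ 2 * binF S.card := by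
  intro g
  induction g with
  | zero =>
    intro G hG S hS
    have hcard : S.card ≤ 1 := by
      have h1 := Finset.card_le_card hS
      rw [Finset.card_powerset, hG] at h1
      simpa using h1
    rw [DD_subsingleton S hcard]
    exact Nat.zero_le _
  | succ g ih =>
    intro G hG S hS
    have hGne : G.Nonempty := Finset.card_pos.1 (by omega)
    obtain ⟨i, hi⟩ := hGne
    have hG' : (G.erase i).card = g := by rw [Finset.card_erase_of_mem hi, hG]; omega
    have h1 := ih (G.erase i) hG' (SX i S) (SX_sub hS)
    have h2 := ih (G.erase i) hG' (SY i S) (SY_sub hS)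
    have h3 := DD_split i S
    have h4a : ((SX i S) ∩ (SY i S)).card ≤ (SX i S).card :=
      Finset.card_le_card Finset.inter_subset_left
    have h4b : ((SX i S) ∩ (SY i S)).card ≤ (SY i S).card :=
      Finset.card_le_card Finset.inter_subset_right
    have h5 := hart (SX i S).card (SY i S).card
    have h6 := card_split i S
    rw [← h6]
    omega


-- ====== part 5 ======

lemma pairlem_aux (G' : Finset (Fin n))
    (IH : ∀ T, T ⊆ G'.powerset → 2 * T.card ≤ 2 ^ G'.card → DD T + MM G' T ≤ 2 * binF T.card)
    (X Y : Finset (Finset (Fin n))) (hX : X ⊆ G'.powerset) (hY : Y ⊆ G'.powerset)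
    (hs : X.card + Y.card ≤ 2 ^ G'.card) (hxy : X.card ≤ Y.card) :
    DD X + DD Y + 2 * (X ∩ Y).card + 2 * crossB G' X Y ≤ 2 * binF (X.card + Y.card) := by
  rcases Nat.eq_zero_or_pos X.card with hx0 | hx1
  · have hXe : X = ∅ := Finset.card_eq_zero.1 hx0
    subst hXe
    have h0 : DD (∅ : Finset (Finset (Fin n))) = 0 := DD_subsingleton ∅ (by simp)
    have h1 : ((∅ : Finset (Finset (Fin n))) ∩ Y).card = 0 := by simp
    have h2 : crossB G' (∅ : Finset (Finset (Fin n))) Y = 0 := by simp [crossB]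
    have h3 := harper G'.card G' rfl Y hY
    rw [h0, h1, h2]
    simpa using h3
  · have hy1 : 1 ≤ Y.card := le_trans hx1 hxy
    have hg1 : 1 ≤ G'.card := by
      by_contra hcon
      have hzg : G'.card = 0 := by omega
      rw [hzg, pow_zero] at hs
      omega
    have hIHX : DD X + (X ∩ bim G' X).card ≤ 2 * binF X.card := by
      have h := IH X hX (by omega)
      rw [MM_eq_inter hX] at h; exact h
    have hk1 := key1 hX hY
    have hk2 := key2 hX hY
    rcases le_or_gt (2 * Y.card) (2 ^ G'.card) with hcase | hcase
    · -- CASE 1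
      have hIHY : DD Y + (Y ∩ bim G' Y).card ≤ 2 * binF Y.card := by
        have h := IH Y hY hcase
        rw [MM_eq_inter hY] at h; exact h
      have hh := hart X.card Y.card
      have hmin : min X.card Y.card = X.card := min_eq_left hxy
      omega
    · -- CASE 2
      have hNpow : 2 * 2 ^ (G'.card - 1) = 2 ^ G'.card := by
        have h' : (2:ℕ)^(G'.card - 1 + 1) = 2^(G'.card - 1) * 2 := pow_succ 2 _
        rw [show G'.card - 1 + 1 = G'.card by omega] at h'
        omega
      have hyN : 2 ^ (G'.card - 1) < Y.card := by omega
      have hy'le : Y.card - 2^(G'.card - 1) ≤ 2^(G'.card - 1) := by omega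
      have hxy'le : X.card + (Y.card - 2^(G'.card - 1)) ≤ 2^(G'.card - 1) := by omega
      have e2 : binF (X.card + Y.card) = binF (2^(G'.card - 1))
          + (X.card + (Y.card - 2^(G'.card - 1))) + binF (X.card + (Y.card - 2^(G'.card - 1))) := by
        have h' := binF_pow_add (G'.card - 1) (X.card + (Y.card - 2^(G'.card - 1))) hxy'le
        rw [show 2^(G'.card - 1) + (X.card + (Y.card - 2^(G'.card - 1))) = X.card + Y.card by omega] at h'
        exact h'
      rcases le_or_gt X.card (Y.card - 2^(G'.card - 1)) with h2a | h2b
      · -- CASE 2a : y' >= x, crude bounds suffice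
        have hhX := harper G'.card G' rfl X hX
        have hhY := harper G'.card G' rfl Y hY
        have hiXY : (X ∩ Y).card ≤ X.card := Finset.card_le_card Finset.inter_subset_left
        have hcross : crossB G' X Y ≤ X.card := Finset.card_le_card (Finset.filter_subset _ _)
        have e1 : binF Y.card = binF (2^(G'.card - 1)) + (Y.card - 2^(G'.card - 1))
            + binF (Y.card - 2^(G'.card - 1)) := by
          have h' := binF_pow_add (G'.card - 1) (Y.card - 2^(G'.card - 1)) hy'le
          rw [show 2^(G'.card - 1) + (Y.card - 2^(G'.card - 1)) = Y.card by omega] at h'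
          exact h'
        have hh := hart X.card (Y.card - 2^(G'.card - 1))
        have hmin : min X.card (Y.card - 2^(G'.card - 1)) = X.card := min_eq_left h2a
        omega
      · -- CASE 2b : y' < x, complement argument
        have hYc_sub : G'.powerset \ Y ⊆ G'.powerset := Finset.sdiff_subset
        have hycard : (G'.powerset \ Y).card + Y.card = 2 ^ G'.card := by
          rw [Finset.card_sdiff_add_card_eq_card hY, Finset.card_powerset]
        have hIHYc : DD (G'.powerset \ Y)
            + ((G'.powerset \ Y) ∩ bim G' (G'.powerset \ Y)).card
            ≤ 2 * binF (G'.powerset \ Y).card := by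
          have h := IH _ hYc_sub (by omega)
          rw [MM_eq_inter hYc_sub] at h; exact h
        have hreg1 := reg hY
        have hreg2 := reg hYc_sub
        have hYcc : G'.powerset \ (G'.powerset \ Y) = Y := Finset.sdiff_sdiff_eq_self hY
        rw [hYcc] at hreg2
        have hswap : edgesBetween Y (G'.powerset \ Y) = edgesBetween (G'.powerset \ Y) Y :=
          EB_swap _ _
        rw [← hswap] at hreg2
        have hpu := Finset.card_inter_add_card_union Y (bim G' Y)
        have hbYcard : (bim G' Y).card = Y.card := card_bim hY
        have hUc : (Y ∪ bim G' Y) ⊆ G'.powerset := Finset.union_subset hY bim_sub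
        have hUcc : (G'.powerset \ Y) ∩ bim G' (G'.powerset \ Y)
            = G'.powerset \ (Y ∪ bim G' Y) := by
          ext z
          simp only [Finset.mem_inter, Finset.mem_sdiff, Finset.mem_union]
          constructor
          · rintro ⟨⟨hzP, hzY⟩, hzb⟩
            rw [mem_bim hYc_sub] at hzb
            obtain ⟨hzG, hzc⟩ := hzb
            rw [Finset.mem_sdiff] at hzc
            refine ⟨hzP, ?_⟩
            rintro (h | h)
            · exact hzY h
            · rw [mem_bim hY] at h
              exact hzc.2 h.2
          · rintro ⟨hzP, hno⟩
            push_neg at hno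
            refine ⟨⟨hzP, hno.1⟩, ?_⟩
            rw [mem_bim hYc_sub]
            refine ⟨Finset.mem_powerset.1 hzP, ?_⟩
            rw [Finset.mem_sdiff]
            refine ⟨Finset.mem_powerset.2 Finset.sdiff_subset, ?_⟩
            intro hcon
            apply hno.2
            rw [mem_bim hY]
            exact ⟨Finset.mem_powerset.1 hzP, hcon⟩
        have hUcard := Finset.card_sdiff_add_card_eq_card hUc
        rw [Finset.card_powerset] at hUcard
        rw [← hUcc] at hUcard
        have hyc_eq : (G'.powerset \ Y).card = 2^(G'.card - 1) - (Y.card - 2^(G'.card - 1)) := by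
          omega
        have e1 : binF (G'.powerset \ Y).card + (G'.card - 1) * (Y.card - 2^(G'.card - 1))
            = binF (2^(G'.card - 1)) + binF (Y.card - 2^(G'.card - 1)) := by
          have h' := binF_reflect (G'.card - 1) (Y.card - 2^(G'.card - 1)) (by omega)
          rw [← hyc_eq] at h'
          exact h'
        have hh := hart X.card (Y.card - 2^(G'.card - 1))
        have hmin : min X.card (Y.card - 2^(G'.card - 1)) = Y.card - 2^(G'.card - 1) :=
          min_eq_right (le_of_lt h2b)
        have hyrel : Y.card = (G'.powerset \ Y).card + 2 * (Y.card - 2^(G'.card - 1)) := by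
          omega
        have hprod : G'.card * Y.card = G'.card * (G'.powerset \ Y).card
            + 2 * (G'.card * (Y.card - 2^(G'.card - 1))) := by
          calc G'.card * Y.card
              = G'.card * ((G'.powerset \ Y).card + 2 * (Y.card - 2^(G'.card - 1))) := by
                rw [← hyrel]
            _ = _ := by ring
        have hBrel : (G'.card - 1) * (Y.card - 2^(G'.card - 1)) + (Y.card - 2^(G'.card - 1))
            = G'.card * (Y.card - 2^(G'.card - 1)) := by
          have hgg : G'.card - 1 + 1 = G'.card := by omega
          calc (G'.card - 1) * (Y.card - 2^(G'.card - 1)) + (Y.card - 2^(G'.card - 1))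
              = (G'.card - 1 + 1) * (Y.card - 2^(G'.card - 1)) := by ring
            _ = _ := by rw [hgg]
        set DDX := DD X
        set DDY := DD Y
        set DDYc := DD (G'.powerset \ Y)
        set sX := (X ∩ bim G' X).card
        set q := (X ∩ (Y ∩ bim G' Y)).card
        set p := (Y ∩ bim G' Y).card
        set pc := ((G'.powerset \ Y) ∩ bim G' (G'.powerset \ Y)).card
        set CR := edgesBetween Y (G'.powerset \ Y)
        set bx := binF X.card
        set by' := binF (Y.card - 2^(G'.card - 1))
        set byc := binF (G'.powerset \ Y).card
        set bN := binF (2^(G'.card - 1))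
        set bxy := binF (X.card + Y.card)
        set bxy' := binF (X.card + (Y.card - 2^(G'.card - 1)))
        set A := (G'.card - 1) * (Y.card - 2^(G'.card - 1))
        set B := G'.card * (Y.card - 2^(G'.card - 1))
        set P1 := G'.card * Y.card
        set P2 := G'.card * (G'.powerset \ Y).card
        omega

lemma pairlem (G' : Finset (Fin n))
    (IH : ∀ T, T ⊆ G'.powerset → 2 * T.card ≤ 2 ^ G'.card → DD T + MM G' T ≤ 2 * binF T.card)
    (X Y : Finset (Finset (Fin n))) (hX : X ⊆ G'.powerset) (hY : Y ⊆ G'.powerset)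
    (hs : X.card + Y.card ≤ 2 ^ G'.card) :
    DD X + DD Y + 2 * (X ∩ Y).card + 2 * crossB G' X Y ≤ 2 * binF (X.card + Y.card) := by
  rcases le_total X.card Y.card with h | h
  · exact pairlem_aux G' IH X Y hX hY hs h
  · have hres := pairlem_aux G' IH Y X hY hX (by omega) h
    have hcomm := crossB_comm G' X Y hX hY
    have hint : (Y ∩ X).card = (X ∩ Y).card := by rw [Finset.inter_comm]
    rw [show Y.card + X.card = X.card + Y.card by ring] at hres
    omega

theorem Eclaim : ∀ (g : ℕ) (G : Finset (Fin n)), G.card = g →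
    ∀ S, S ⊆ G.powerset → 2 * S.card ≤ 2 ^ g → DD S + MM G S ≤ 2 * binF S.card := by
  intro g
  induction g with
  | zero =>
    intro G hG S hS hhalf
    have hc : S.card = 0 := by
      rw [pow_zero] at hhalf; omega
    have hSe : S = ∅ := Finset.card_eq_zero.1 hc
    subst hSe
    have h0 : DD (∅ : Finset (Finset (Fin n))) = 0 := DD_subsingleton ∅ (by simp)
    rw [h0]
    unfold MM
    simp [binF_zero]
  | succ g ih =>
    intro G hG S hS hhalf
    obtain ⟨i, hi⟩ := Finset.card_pos.1 (show 0 < G.card by omega)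
    have hG' : (G.erase i).card = g := by rw [Finset.card_erase_of_mem hi, hG]; omega
    have hsplitD := DD_split i S
    have hsplitM := MM_split G i S hi hS
    have hcards := card_split i S
    have hIH : ∀ T, T ⊆ (G.erase i).powerset → 2 * T.card ≤ 2 ^ (G.erase i).card →
        DD T + MM (G.erase i) T ≤ 2 * binF T.card := by
      intro T hT hT2
      rw [hG'] at hT2
      exact ih (G.erase i) hG' T hT hT2
    have hps : (SX i S).card + (SY i S).card ≤ 2 ^ (G.erase i).card := by
      rw [hG', hcards]
      have hpow : (2:ℕ)^(g+1) = 2 * 2^g := by ring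
      omega
    have hpair := pairlem (G.erase i) hIH (SX i S) (SY i S) (SX_sub hS) (SY_sub hS) hps
    rw [← hcards]
    omega


-- ====== part 6 ======

lemma boundary_identity (F : Finset (Finset (Fin n))) :
    edgeBoundary F + DD F = n * F.card := by
  have h1 : edgeBoundary F = edgesBetween F Fᶜ := rfl
  rw [h1, EB_eq_sum, DD_eq_sum, ← Finset.sum_add_distrib]
  have hstep : ∀ x ∈ F, dg Fᶜ x + dg F x = n := by
    intro x _
    have hd : Disjoint Fᶜ F := disjoint_compl_left
    have hu : Fᶜ ∪ F = univ := by
      rw [Finset.union_comm]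
      exact Finset.union_compl F
    have hcalc : dg Fᶜ x + dg F x = dg (univ : Finset (Finset (Fin n))) x := by
      rw [← dg_union _ _ _ hd, hu]
    rw [hcalc]
    have hn := nbr_count (univ : Finset (Fin n)) x (Finset.subset_univ x)
    rw [Finset.powerset_univ] at hn
    rw [hn, Finset.card_univ, Fintype.card_fin]
  rw [Finset.sum_congr rfl hstep, Finset.sum_const, smul_eq_mul, mul_comm]

lemma antipodal_mem {A : Finset (Finset (Fin n))} (hA : barFam A = A) (x : Finset (Fin n)) :
    x ∈ A ↔ xᶜ ∈ A := by
  constructor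
  · intro h
    rw [← hA]
    exact Finset.mem_image_of_mem _ h
  · intro h
    have h2 : (xᶜ)ᶜ ∈ barFam A := Finset.mem_image_of_mem _ h
    rw [hA, compl_compl] at h2
    exact h2

lemma compl_insert_eq {i : Fin n} {z : Finset (Fin n)} :
    (insert i z)ᶜ = ((univ : Finset (Fin n)).erase i) \ z := by
  ext a
  simp only [Finset.mem_compl, Finset.mem_insert, Finset.mem_sdiff, Finset.mem_erase,
    Finset.mem_univ, and_true]
  tauto

lemma secY_eq {A : Finset (Finset (Fin n))} (hA : barFam A = A) (i : Fin n) :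
    SY i A = bim ((univ : Finset (Fin n)).erase i) (SX i A) := by
  have hAsub : A ⊆ (univ : Finset (Fin n)).powerset := by
    intro x _
    exact Finset.mem_powerset.2 (Finset.subset_univ x)
  ext z
  rw [mem_SY, mem_bim (SX_sub hAsub), mem_SX]
  constructor
  · rintro ⟨h1, h2⟩
    have hz : z ⊆ (univ : Finset (Fin n)).erase i := by
      rw [Finset.subset_erase]
      exact ⟨Finset.subset_univ z, h1⟩
    refine ⟨hz, ?_, ?_⟩
    · rw [← compl_insert_eq]
      exact (antipodal_mem hA _).1 h2
    · intro hcon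
      exact Finset.notMem_erase i univ (Finset.mem_sdiff.1 hcon).1
  · rintro ⟨h1, h2, _⟩
    have hiz : i ∉ z := fun hc => (Finset.mem_erase.1 (h1 hc)).1 rfl
    refine ⟨hiz, ?_⟩
    rw [← compl_insert_eq] at h2
    exact (antipodal_mem hA _).2 h2

lemma symmDiff_sdiff_sdiff {G' x y : Finset (Fin n)} (hx : x ⊆ G') (hy : y ⊆ G') :
    symmDiff (G' \ x) (G' \ y) = symmDiff x y := by
  ext a
  simp only [Finset.mem_symmDiff, Finset.mem_sdiff]
  by_cases haG : a ∈ G'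
  · simp only [haG, true_and]
    tauto
  · have h1 : a ∉ x := fun h => haG (hx h)
    have h2 : a ∉ y := fun h => haG (hy h)
    simp [haG, h1, h2]

lemma DD_antipodal_bound {A : Finset (Finset (Fin n))} (hA : barFam A = A) {k : ℕ}
    (hk1 : 1 ≤ k) (hkn : k ≤ n - 1) (hcard : A.card = 2 ^ k) :
    DD A ≤ (k - 1) * 2 ^ k := by
  have hn2 : 2 ≤ n := by omega
  set i : Fin n := ⟨0, by omega⟩ with hidef
  have hAsub : A ⊆ (univ : Finset (Fin n)).powerset := by
    intro x _
    exact Finset.mem_powerset.2 (Finset.subset_univ x)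
  have hXsub := SX_sub (i := i) hAsub
  have hGcard : ((univ : Finset (Fin n)).erase i).card = n - 1 := by
    rw [Finset.card_erase_of_mem (Finset.mem_univ i), Finset.card_univ, Fintype.card_fin]
  -- SY = bim SX
  have hYX := secY_eq hA i
  -- cardinalities
  have hcards := card_split i A
  have hYcard : (SY i A).card = (SX i A).card := by
    rw [hYX]
    exact card_bim hXsub
  have hXcard2 : 2 * (SX i A).card = 2 ^ k := by omega
  have hpow : (2:ℕ)^k = 2^(k-1) * 2 := by
    have h := pow_succ 2 (k-1)
    rw [show k - 1 + 1 = k by omega] at h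
    exact h
  have hXcard : (SX i A).card = 2^(k-1) := by omega
  -- split identity
  have hsplit := DD_split i A
  have hDDY : DD (SY i A) = DD (SX i A) := by
    rw [hYX]
    apply DD_image
    · intro x hx y hy hxy
      have hxy' : _root_.id ((univ : Finset (Fin n)).erase i \ x) = _root_.id ((univ : Finset (Fin n)).erase i \ y) := hxy
      simp only [_root_.id] at hxy'
      have h1 := Finset.sdiff_sdiff_eq_self (Finset.mem_powerset.1 (hXsub hx))
      have h2 := Finset.sdiff_sdiff_eq_self (Finset.mem_powerset.1 (hXsub hy))
      rw [← h1, ← h2, hxy']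
    · intro x hx y hy
      rw [symmDiff_sdiff_sdiff (Finset.mem_powerset.1 (hXsub hx)) (Finset.mem_powerset.1 (hXsub hy))]
  have hinter : ((SX i A) ∩ (SY i A)).card = MM ((univ : Finset (Fin n)).erase i) (SX i A) := by
    rw [hYX, MM_eq_inter hXsub]
  -- apply Eclaim
  have hEc := Eclaim (n-1) ((univ : Finset (Fin n)).erase i) hGcard (SX i A) hXsub
    (by rw [hXcard2]; exact Nat.pow_le_pow_right (by norm_num) hkn)
  -- arithmetic
  have hbF := binF_two_pow (k-1)
  have hfinal : (k - 1) * 2 ^ k = 2 * ((k-1) * 2^(k-1)) := by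
    rw [hpow]; ring
  rw [hXcard] at hEc
  omega


-- ====== part 7 ======

lemma DD_powerset (F : Finset (Fin n)) : DD F.powerset = F.card * 2 ^ F.card := by
  rw [DD_eq_sum]
  have hstep : ∀ x ∈ F.powerset, dg F.powerset x = F.card := by
    intro x hx
    exact nbr_count F x (Finset.mem_powerset.1 hx)
  rw [Finset.sum_congr rfl hstep, Finset.sum_const, smul_eq_mul, Finset.card_powerset, mul_comm]

lemma compl_inj_family : Function.Injective (fun x : Finset (Fin n) => xᶜ) := by
  intro a b h
  have h' : aᶜ = bᶜ := h
  rw [← compl_compl a, h', compl_compl]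

lemma DD_barFam (S : Finset (Finset (Fin n))) : DD (barFam S) = DD S := by
  unfold barFam
  apply DD_image
  · exact fun x _ y _ h => compl_inj_family h
  · intro x _ y _
    rw [compl_symmDiff_compl]

lemma DD_union_ge (S T : Finset (Finset (Fin n))) (h : Disjoint S T) :
    DD S + DD T ≤ DD (S ∪ T) := by
  unfold DD edgesBetween
  have hsub : ((S ×ˢ S).filter (fun p => (symmDiff p.1 p.2).card = 1))
      ∪ ((T ×ˢ T).filter (fun p => (symmDiff p.1 p.2).card = 1))
      ⊆ (((S ∪ T) ×ˢ (S ∪ T)).filter (fun p => (symmDiff p.1 p.2).card = 1)) := by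
    intro p hp
    rcases Finset.mem_union.1 hp with hp' | hp' <;>
    · rw [Finset.mem_filter, Finset.mem_product] at hp'
      rw [Finset.mem_filter, Finset.mem_product]
      exact ⟨⟨Finset.mem_union.2 (by tauto), Finset.mem_union.2 (by tauto)⟩, hp'.2⟩
  have hdisj : Disjoint ((S ×ˢ S).filter (fun p => (symmDiff p.1 p.2).card = 1))
      ((T ×ˢ T).filter (fun p => (symmDiff p.1 p.2).card = 1)) := by
    rw [Finset.disjoint_left]
    intro p hp1 hp2
    rw [Finset.mem_filter, Finset.mem_product] at hp1 hp2
    exact (Finset.disjoint_left.1 h) hp1.1.1 hp2.1.1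
  calc ((S ×ˢ S).filter (fun p => (symmDiff p.1 p.2).card = 1)).card
      + ((T ×ˢ T).filter (fun p => (symmDiff p.1 p.2).card = 1)).card
      = (((S ×ˢ S).filter (fun p => (symmDiff p.1 p.2).card = 1))
        ∪ ((T ×ˢ T).filter (fun p => (symmDiff p.1 p.2).card = 1))).card :=
        (Finset.card_union_of_disjoint hdisj).symm
    _ ≤ _ := Finset.card_le_card hsub

lemma subcube_eq (d : ℕ) :
    subcube n d = ((univ : Finset (Fin n)).filter (fun j : Fin n => (j : ℕ) < d)).powerset := by
  ext x
  rw [subcube, Finset.mem_filter, Finset.mem_powerset]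
  constructor
  · rintro ⟨_, h2⟩
    intro a ha
    exact Finset.mem_filter.2 ⟨Finset.mem_univ a, h2 a ha⟩
  · intro h
    refine ⟨Finset.mem_univ x, fun a ha => ?_⟩
    exact (Finset.mem_filter.1 (h ha)).2

lemma card_filter_lt (d : ℕ) (hd : d ≤ n) :
    ((univ : Finset (Fin n)).filter (fun j : Fin n => (j : ℕ) < d)).card = d := by
  have hb : ((univ : Finset (Fin n)).filter (fun j : Fin n => (j : ℕ) < d)).card
      = (Finset.range d).card := by
    refine Finset.card_bij (fun (j : Fin n) (_ : j ∈ (univ : Finset (Fin n)).filter (fun j : Fin n => (j : ℕ) < d)) => (j : ℕ)) ?_ ?_ ?_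
    · intro j hj
      rw [Finset.mem_filter] at hj
      rw [Finset.mem_range]
      exact hj.2
    · intro j1 h1 j2 h2 heq
      exact Fin.ext heq
    · intro m hm
      rw [Finset.mem_range] at hm
      refine ⟨⟨m, lt_of_lt_of_le hm hd⟩, ?_, rfl⟩
      rw [Finset.mem_filter]
      exact ⟨Finset.mem_univ _, hm⟩
  rw [hb, Finset.card_range]


end AP

theorem stmt14 (n k : ℕ) (hk1 : 1 ≤ k) (hkn : k ≤ n - 1)
    (A : Finset (Finset (Fin n))) (hA : barFam A = A) (hcard : A.card = 2 ^ k) :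
    edgeBoundary (subcube n (k - 1) ∪ barFam (subcube n (k - 1))) ≤
      edgeBoundary A := by
  have hn2 : 2 ≤ n := by omega
  have hd : k - 1 ≤ n := by omega
  -- the subcube as a powerset
  have hsc := AP.subcube_eq (n := n) (k-1)
  have hFd := AP.card_filter_lt (n := n) (k-1) hd
  have hsccard : (subcube n (k-1)).card = 2^(k-1) := by
    rw [hsc, Finset.card_powerset, hFd]
  have hbarcard : (barFam (subcube n (k-1))).card = 2^(k-1) := by
    unfold barFam
    rw [Finset.card_image_of_injective _ AP.compl_inj_family, hsccard]
  -- disjointness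
  have hdisj : Disjoint (subcube n (k-1)) (barFam (subcube n (k-1))) := by
    rw [Finset.disjoint_left]
    intro x hx hx'
    obtain ⟨y, hy, rfl⟩ := Finset.mem_image.1 hx'
    set a : Fin n := ⟨n-1, by omega⟩ with hadef
    have haval : (a : ℕ) = n - 1 := rfl
    have hanot : ∀ z ∈ subcube n (k-1), a ∉ z := by
      intro z hz hain
      rw [subcube, Finset.mem_filter] at hz
      have := hz.2 a hain
      omega
    have hay : a ∉ y := hanot y hy
    have hax : a ∈ yᶜ := Finset.mem_compl.2 hay
    exact hanot _ hx hax
  -- cardinality of the union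
  have hucard : (subcube n (k-1) ∪ barFam (subcube n (k-1))).card = 2^k := by
    rw [Finset.card_union_of_disjoint hdisj, hsccard, hbarcard]
    have h := pow_succ 2 (k-1)
    rw [show k - 1 + 1 = k by omega] at h
    omega
  -- DD of the subcube
  have hDDsc : AP.DD (subcube n (k-1)) = (k-1) * 2^(k-1) := by
    rw [hsc, AP.DD_powerset, hFd]
  have hDDbar : AP.DD (barFam (subcube n (k-1))) = (k-1) * 2^(k-1) := by
    rw [AP.DD_barFam, hDDsc]
  have hDDU : (k-1) * 2^k ≤ AP.DD (subcube n (k-1) ∪ barFam (subcube n (k-1))) := by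
    have h1 := AP.DD_union_ge _ _ hdisj
    rw [hDDsc, hDDbar] at h1
    have hpow : (2:ℕ)^k = 2^(k-1) * 2 := by
      have h := pow_succ 2 (k-1)
      rw [show k - 1 + 1 = k by omega] at h
      exact h
    have heq : (k-1) * 2^k = (k-1) * 2^(k-1) + (k-1) * 2^(k-1) := by
      rw [hpow]; ring
    omega
  -- boundary identities
  have hb1 := AP.boundary_identity (subcube n (k-1) ∪ barFam (subcube n (k-1)))
  have hb2 := AP.boundary_identity A
  have hDA := AP.DD_antipodal_bound hA hk1 hkn hcard
  rw [hucard] at hb1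
  rw [hcard] at hb2
  omega
end

section
/- If B is an initial segment of the binary ordering on subsets of [n] with |B| ≤ 2^{n-2}, then every member of B is disjoint from {n-1, n}, every member of B̄ contains {n-1, n}, B ∩ B̄ = ∅, and there are no hypercube edges between B and B̄; moreover e(B ∪ B̄) = 2e(B). -/
open Finset

lemma even_card_of_invol {α : Type*} [DecidableEq α] :
    ∀ (m : ℕ) (s : Finset α) (f : α → α), s.card ≤ m →
      (∀ a ∈ s, f a ∈ s) → (∀ a ∈ s, f (f a) = a) → (∀ a ∈ s, f a ≠ a) →
      Even s.card := by
  intro m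
  induction m with
  | zero =>
    intro s f hs _ _ _
    simp [Nat.le_zero.mp hs]
  | succ m ih =>
    intro s f hs hmem hinv hne
    rcases s.eq_empty_or_nonempty with rfl | ⟨a, ha⟩
    · simp
    · have hfa : f a ∈ s := hmem a ha
      have hne' : f a ≠ a := hne a ha
      set t := s \ {a, f a} with ht
      have hsub : ({a, f a} : Finset α) ⊆ s := by
        intro b hb; simp at hb; rcases hb with rfl | rfl <;> assumption
      have hcardpair : ({a, f a} : Finset α).card = 2 := card_pair hne'.symm
      have hcard : t.card = s.card - 2 := by rw [ht, card_sdiff_of_subset hsub, hcardpair]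
      have h2le : 2 ≤ s.card := by
        calc 2 = ({a, f a} : Finset α).card := hcardpair.symm
        _ ≤ s.card := card_le_card hsub
      have hmem' : ∀ b ∈ t, f b ∈ t := by
        intro b hb
        rw [ht, mem_sdiff] at hb ⊢
        obtain ⟨hbs, hbne⟩ := hb
        simp only [mem_insert, mem_singleton] at hbne ⊢
        push_neg at hbne ⊢
        refine ⟨hmem b hbs, ?_, ?_⟩
        · intro h; apply hbne.2
          have := hinv b hbs; rw [h] at this
          rw [← this]
        · intro h
          apply hbne.1
          have : f (f b) = f (f a) := by rw [h]
          rwa [hinv b hbs, hinv a ha] at this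
      have hinv' : ∀ b ∈ t, f (f b) = b := fun b hb => hinv b (mem_sdiff.mp hb).1
      have hne'' : ∀ b ∈ t, f b ≠ b := fun b hb => hne b (mem_sdiff.mp hb).1
      have hle : t.card ≤ m := by omega
      obtain ⟨r, hr⟩ := ih t f hle hmem' hinv' hne''
      exact ⟨r + 1, by omega⟩

theorem stmt15 (n k : ℕ) (hn : 2 ≤ n) (hk : k ≤ 2 ^ (n - 2)) :
    (∀ x ∈ iseg n k, ∀ i ∈ x, (i : ℕ) < n - 2) ∧
    (∀ x ∈ barFam (iseg n k), ∀ i : Fin n, n - 2 ≤ (i : ℕ) → i ∈ x) ∧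
    iseg n k ∩ barFam (iseg n k) = ∅ ∧
    edgesBetween (iseg n k) (barFam (iseg n k)) = 0 ∧
    edgeCount (iseg n k ∪ barFam (iseg n k)) = 2 * edgeCount (iseg n k) := by
  set B := iseg n k with hB
  set C := barFam (iseg n k) with hC
  -- Part 1
  have h1 : ∀ x ∈ B, ∀ i ∈ x, (i : ℕ) < n - 2 := by
    intro x hx i hi
    have hxlt : setToNat x < k := by
      rw [hB, iseg, mem_filter] at hx; exact hx.2
    have hle : 2 ^ (i : ℕ) ≤ setToNat x := by
      rw [setToNat]
      exact Finset.single_le_sum (f := fun j : Fin n => 2 ^ (j : ℕ)) (fun j _ => Nat.zero_le _) hi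
    by_contra h
    push_neg at h
    have : 2 ^ (n - 2) ≤ 2 ^ (i : ℕ) := Nat.pow_le_pow_right (by norm_num) h
    omega
  -- Part 2
  have h2 : ∀ x ∈ C, ∀ i : Fin n, n - 2 ≤ (i : ℕ) → i ∈ x := by
    intro x hx i hi
    rw [hC, barFam, mem_image] at hx
    obtain ⟨u, hu, rfl⟩ := hx
    rw [Finset.mem_compl]
    intro hiu
    have := h1 u hu i hiu
    omega
  -- Part 3
  have h3 : B ∩ C = ∅ := by
    rw [eq_empty_iff_forall_notMem]
    intro x hx
    rw [mem_inter] at hx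
    have hb : Fin n := ⟨n - 1, by omega⟩
    have hmem : (⟨n - 1, by omega⟩ : Fin n) ∈ x := h2 x hx.2 _ (by simp; omega)
    have := h1 x hx.1 _ hmem
    simp at this
    omega
  -- key: no edges between B and C
  have key : ∀ x ∈ B, ∀ y ∈ C, (symmDiff x y).card ≠ 1 := by
    intro x hx y hy hcard
    have hab : (n - 2 : ℕ) ≠ n - 1 := by omega
    set a : Fin n := ⟨n - 2, by omega⟩ with hadef
    set b : Fin n := ⟨n - 1, by omega⟩ with hbdef
    have haney : a ≠ b := by simp [hadef, hbdef, Fin.ext_iff]; omega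
    have hax : a ∉ x := fun h => by have := h1 x hx a h; simp [hadef] at this
    have hbx : b ∉ x := fun h => by have := h1 x hx b h; simp [hbdef] at this; omega
    have hay : a ∈ y := h2 y hy a (by simp [hadef])
    have hby : b ∈ y := h2 y hy b (by simp [hbdef]; omega)
    have hsub : ({a, b} : Finset (Fin n)) ⊆ symmDiff x y := by
      intro c hc
      simp only [mem_insert, mem_singleton] at hc
      rw [Finset.mem_symmDiff]
      rcases hc with rfl | rfl
      · exact Or.inr ⟨hay, hax⟩
      · exact Or.inr ⟨hby, hbx⟩
    have := card_le_card hsub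
    rw [card_pair haney, hcard] at this
    omega
  refine ⟨h1, h2, h3, ?_, ?_⟩
  -- Part 4
  · rw [edgesBetween, Finset.card_eq_zero, Finset.filter_eq_empty_iff]
    rintro ⟨x, y⟩ hxy
    rw [mem_product] at hxy
    exact key x hxy.1 y hxy.2
  -- Part 5
  · have hsplit : ((B ∪ C) ×ˢ (B ∪ C)).filter (fun p => (symmDiff p.1 p.2).card = 1)
        = ((B ×ˢ B).filter (fun p => (symmDiff p.1 p.2).card = 1))
          ∪ ((C ×ˢ C).filter (fun p => (symmDiff p.1 p.2).card = 1)) := by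
      ext ⟨x, y⟩
      simp only [mem_filter, mem_product, mem_union]
      constructor
      · rintro ⟨⟨hx | hx, hy | hy⟩, hP⟩
        · exact Or.inl ⟨⟨hx, hy⟩, hP⟩
        · exact absurd hP (key x hx y hy)
        · rw [symmDiff_comm] at hP
          exact absurd hP (key y hy x hx)
        · exact Or.inr ⟨⟨hx, hy⟩, hP⟩
      · rintro (⟨⟨hx, hy⟩, hP⟩ | ⟨⟨hx, hy⟩, hP⟩)
        · exact ⟨⟨Or.inl hx, Or.inl hy⟩, hP⟩
        · exact ⟨⟨Or.inr hx, Or.inr hy⟩, hP⟩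
    have hdisj : Disjoint ((B ×ˢ B).filter (fun p => (symmDiff p.1 p.2).card = 1))
        ((C ×ˢ C).filter (fun p => (symmDiff p.1 p.2).card = 1)) := by
      rw [Finset.disjoint_left]
      rintro ⟨x, y⟩ hp hq
      rw [mem_filter, mem_product] at hp hq
      have : x ∈ B ∩ C := mem_inter.mpr ⟨hp.1.1, hq.1.1⟩
      rw [h3] at this
      exact notMem_empty x this
    have himg : ((C ×ˢ C).filter (fun p => (symmDiff p.1 p.2).card = 1))
        = ((B ×ˢ B).filter (fun p => (symmDiff p.1 p.2).card = 1)).image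
            (fun p => (p.1ᶜ, p.2ᶜ)) := by
      ext ⟨x, y⟩
      simp only [mem_filter, mem_product, mem_image]
      constructor
      · rintro ⟨⟨hx, hy⟩, hP⟩
        rw [hC, barFam, mem_image] at hx hy
        obtain ⟨u, hu, rfl⟩ := hx
        obtain ⟨v, hv, rfl⟩ := hy
        refine ⟨(u, v), ⟨⟨hu, hv⟩, ?_⟩, rfl⟩
        rwa [compl_symmDiff_compl] at hP
      · rintro ⟨⟨u, v⟩, ⟨⟨hu, hv⟩, hP⟩, heq⟩
        obtain ⟨h1', h2'⟩ := Prod.mk.injEq .. ▸ heq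
        simp only at h1' h2'
        subst h1'; subst h2'
        refine ⟨⟨?_, ?_⟩, ?_⟩
        · rw [hC, barFam, mem_image]; exact ⟨u, hu, rfl⟩
        · rw [hC, barFam, mem_image]; exact ⟨v, hv, rfl⟩
        · rwa [compl_symmDiff_compl]
    have hinj : Function.Injective (fun p : Finset (Fin n) × Finset (Fin n) => (p.1ᶜ, p.2ᶜ)) := by
      rintro ⟨x, y⟩ ⟨u, v⟩ h
      simp only [Prod.mk.injEq] at h
      exact Prod.ext (compl_injective h.1) (compl_injective h.2)
    have hcardeq : ((C ×ˢ C).filter (fun p => (symmDiff p.1 p.2).card = 1)).card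
        = ((B ×ˢ B).filter (fun p => (symmDiff p.1 p.2).card = 1)).card := by
      rw [himg, card_image_of_injective _ hinj]
    set m := ((B ×ˢ B).filter (fun p => (symmDiff p.1 p.2).card = 1)).card with hm
    have heven : Even m := by
      apply even_card_of_invol m _ Prod.swap le_rfl
      · rintro ⟨x, y⟩ hp
        rw [mem_filter, mem_product] at hp ⊢
        exact ⟨⟨hp.1.2, hp.1.1⟩, by rw [Prod.swap]; simp only []; rw [symmDiff_comm]; exact hp.2⟩
      · rintro ⟨x, y⟩ _; rfl
      · rintro ⟨x, y⟩ hp h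
        have hxy : y = x := congrArg Prod.fst h
        subst hxy
        rw [mem_filter] at hp
        simp [symmDiff_self] at hp
    have hunion : edgeCount (B ∪ C) = (m + m) / 2 := by
      rw [edgeCount, hsplit, card_union_of_disjoint hdisj, hcardeq]
    obtain ⟨r, hr⟩ := heven
    rw [hunion, edgeCount, ← hm]
    omega
end

section
/- Let A be a family of subsets of [n] and i ∈ [n]. Then f(A) = 2e(A_i^+) + 2e(A_i^-) + 2|A_i^+ ∩ A_i^-| + 2|A_i^+ ∩ complement-bar(A_i^-)|, where f(A) = 2e(A) + |A ∩ Ā|, the sections A_i^± are taken in P([n]\{i}), and the bar on sections denotes complementation within [n]\{i}. -/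
open Finset

lemma two_mul_edgeCount' {n : ℕ} (A : Finset (Finset (Fin n))) :
    2 * edgeCount A =
    ((A ×ˢ A).filter (fun p => (symmDiff p.1 p.2).card = 1)).card := by
  rw [edgeCount]
  set S := (A ×ˢ A).filter (fun p => (symmDiff p.1 p.2).card = 1) with hS
  have key : (S.filter (fun p => toColex p.1 < toColex p.2)).card
      = (S.filter (fun p => ¬ toColex p.1 < toColex p.2)).card := by
    apply Finset.card_bij (fun p _ => Prod.swap p)
    · rintro ⟨x, y⟩ hp
      simp only [hS, mem_filter, mem_product, Prod.swap] at hp ⊢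
      obtain ⟨⟨⟨h1, h2⟩, h3⟩, h4⟩ := hp
      exact ⟨⟨⟨h2, h1⟩, by rw [symmDiff_comm]; exact h3⟩, not_lt_of_gt h4⟩
    · rintro ⟨x, y⟩ _ ⟨a, b⟩ _ h
      simpa [Prod.ext_iff, and_comm] using h
    · rintro ⟨x, y⟩ hp
      refine ⟨(y, x), ?_, rfl⟩
      simp only [hS, mem_filter, mem_product] at hp ⊢
      obtain ⟨⟨⟨h1, h2⟩, h3⟩, h4⟩ := hp
      have hne : x ≠ y := by
        intro h; subst h; simp [symmDiff_self] at h3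
      have : toColex y < toColex x :=
        lt_of_le_of_ne (le_of_not_gt h4) (fun h => hne (toColex_inj.1 h.symm))
      exact ⟨⟨⟨h2, h1⟩, by rw [symmDiff_comm]; exact h3⟩, this⟩
  have hsplit := Finset.card_filter_add_card_filter_not
      (s := S) (p := fun p => toColex p.1 < toColex p.2)
  have : 2 ∣ S.card :=
    ⟨(S.filter (fun p => toColex p.1 < toColex p.2)).card, by omega⟩
  exact Nat.mul_div_cancel' this

lemma mem_secUp {n : ℕ} {A : Finset (Finset (Fin n))} {i : Fin n} {x : Finset (Fin n)} :
    x ∈ secUp A i ↔ i ∉ x ∧ insert i x ∈ A := by simp [secUp]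

lemma mem_secDown {n : ℕ} {A : Finset (Finset (Fin n))} {i : Fin n} {x : Finset (Fin n)} :
    x ∈ secDown A i ↔ i ∉ x ∧ x ∈ A := by simp [secDown]

lemma symmDiff_erase_erase {n : ℕ} {i : Fin n} {x y : Finset (Fin n)}
    (hx : i ∈ x) (hy : i ∈ y) :
    symmDiff (x.erase i) (y.erase i) = symmDiff x y := by
  ext j
  by_cases hj : j = i <;>
    simp [Finset.mem_symmDiff, Finset.mem_erase, hj, hx, hy]

lemma symmDiff_insert_self' {n : ℕ} {i : Fin n} {z : Finset (Fin n)} (hz : i ∉ z) :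
    symmDiff (insert i z) z = {i} := by
  ext j
  by_cases hj : j = i <;>
    simp [Finset.mem_symmDiff, Finset.mem_insert, hj, hz]

lemma eq_insert_of_symmDiff {n : ℕ} {i : Fin n} {x y : Finset (Fin n)}
    (hx : i ∈ x) (hy : i ∉ y) (h : (symmDiff x y).card = 1) : x = insert i y := by
  obtain ⟨a, ha⟩ := Finset.card_eq_one.1 h
  have hia : i ∈ symmDiff x y := Finset.mem_symmDiff.2 (Or.inl ⟨hx, hy⟩)
  rw [ha, Finset.mem_singleton] at hia
  subst hia
  ext j
  by_cases hj : j = i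
  · subst hj; simp [hx]
  · have hns : j ∉ symmDiff x y := by rw [ha]; simp [hj]
    simp only [Finset.mem_symmDiff] at hns
    push_neg at hns
    simp only [Finset.mem_insert, hj, false_or]
    exact ⟨fun hjx => hns.1 hjx, fun hjy => hns.2 hjy⟩

lemma edge_split {n : ℕ} (A : Finset (Finset (Fin n))) (i : Fin n) :
    ((A ×ˢ A).filter (fun p => (symmDiff p.1 p.2).card = 1)).card =
      ((secUp A i ×ˢ secUp A i).filter (fun p => (symmDiff p.1 p.2).card = 1)).card
      + ((secDown A i ×ˢ secDown A i).filter (fun p => (symmDiff p.1 p.2).card = 1)).card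
      + 2 * (secUp A i ∩ secDown A i).card := by
  classical
  set E := (A ×ˢ A).filter (fun p => (symmDiff p.1 p.2).card = 1) with hE
  have memE : ∀ p : Finset (Fin n) × Finset (Fin n),
      p ∈ E ↔ p.1 ∈ A ∧ p.2 ∈ A ∧ (symmDiff p.1 p.2).card = 1 := by
    intro p; simp [hE, Finset.mem_filter, Finset.mem_product, and_assoc]
  have h1 := Finset.card_filter_add_card_filter_not
      (s := E) (p := fun p => i ∈ p.1)
  have h2 := Finset.card_filter_add_card_filter_not
      (s := E.filter (fun p => i ∈ p.1)) (p := fun p => i ∈ p.2)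
  have h3 := Finset.card_filter_add_card_filter_not
      (s := E.filter (fun p => ¬ i ∈ p.1)) (p := fun p => i ∈ p.2)
  have ha : ((E.filter (fun p => i ∈ p.1)).filter (fun p => i ∈ p.2)).card =
      ((secUp A i ×ˢ secUp A i).filter (fun p => (symmDiff p.1 p.2).card = 1)).card := by
    refine Finset.card_bij' (fun p _ => (p.1.erase i, p.2.erase i))
        (fun q _ => (insert i q.1, insert i q.2)) ?_ ?_ ?_ ?_
    · rintro ⟨x, y⟩ hp
      simp only [Finset.mem_filter] at hp
      obtain ⟨⟨hpE, hx⟩, hy⟩ := hp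
      obtain ⟨hxA, hyA, hcard⟩ := (memE _).1 hpE
      simp only [Finset.mem_filter, Finset.mem_product, mem_secUp]
      refine ⟨⟨⟨Finset.notMem_erase _ _, ?_⟩, ⟨Finset.notMem_erase _ _, ?_⟩⟩, ?_⟩
      · rwa [Finset.insert_erase hx]
      · rwa [Finset.insert_erase hy]
      · rw [symmDiff_erase_erase hx hy]; exact hcard
    · rintro ⟨x, y⟩ hq
      simp only [Finset.mem_filter, Finset.mem_product, mem_secUp] at hq
      obtain ⟨⟨⟨hix, hxA⟩, ⟨hiy, hyA⟩⟩, hcard⟩ := hq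
      simp only [Finset.mem_filter]
      refine ⟨⟨(memE _).2 ⟨hxA, hyA, ?_⟩, Finset.mem_insert_self _ _⟩,
        Finset.mem_insert_self _ _⟩
      have e1 : (insert i x).erase i = x := Finset.erase_insert hix
      have e2 : (insert i y).erase i = y := Finset.erase_insert hiy
      rw [← symmDiff_erase_erase (Finset.mem_insert_self i x)
        (Finset.mem_insert_self i y), e1, e2]
      exact hcard
    · rintro ⟨x, y⟩ hp
      simp only [Finset.mem_filter] at hp
      simp [Finset.insert_erase hp.1.2, Finset.insert_erase hp.2]
    · rintro ⟨x, y⟩ hq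
      simp only [Finset.mem_filter, Finset.mem_product, mem_secUp] at hq
      simp [Finset.erase_insert hq.1.1.1, Finset.erase_insert hq.1.2.1]
  have hb : ((E.filter (fun p => ¬ i ∈ p.1)).filter (fun p => ¬ i ∈ p.2)).card =
      ((secDown A i ×ˢ secDown A i).filter (fun p => (symmDiff p.1 p.2).card = 1)).card := by
    congr 1
    ext ⟨x, y⟩
    simp only [Finset.mem_filter, Finset.mem_product, mem_secDown, memE]
    tauto
  have hc : ((E.filter (fun p => i ∈ p.1)).filter (fun p => ¬ i ∈ p.2)).card =
      (secUp A i ∩ secDown A i).card := by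
    refine Finset.card_bij' (fun p _ => p.2) (fun z _ => (insert i z, z)) ?_ ?_ ?_ ?_
    · rintro ⟨x, y⟩ hp
      simp only [Finset.mem_filter] at hp
      obtain ⟨⟨hpE, hx⟩, hy⟩ := hp
      obtain ⟨hxA, hyA, hcard⟩ := (memE _).1 hpE
      have hxy : x = insert i y := eq_insert_of_symmDiff hx hy hcard
      rw [Finset.mem_inter, mem_secUp, mem_secDown]
      exact ⟨⟨hy, hxy ▸ hxA⟩, hy, hyA⟩
    · rintro z hz
      rw [Finset.mem_inter, mem_secUp, mem_secDown] at hz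
      obtain ⟨⟨hiz, hins⟩, _, hzA⟩ := hz
      simp only [Finset.mem_filter]
      exact ⟨⟨(memE _).2 ⟨hins, hzA, by rw [symmDiff_insert_self' hiz]; simp⟩,
        Finset.mem_insert_self _ _⟩, hiz⟩
    · rintro ⟨x, y⟩ hp
      simp only [Finset.mem_filter] at hp
      obtain ⟨⟨hpE, hx⟩, hy⟩ := hp
      obtain ⟨hxA, hyA, hcard⟩ := (memE _).1 hpE
      have hxy : x = insert i y := eq_insert_of_symmDiff hx hy hcard
      simp [hxy]
    · rintro z _; rfl
  have hd : ((E.filter (fun p => ¬ i ∈ p.1)).filter (fun p => i ∈ p.2)).card =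
      (secUp A i ∩ secDown A i).card := by
    refine Finset.card_bij' (fun p _ => p.1) (fun z _ => (z, insert i z)) ?_ ?_ ?_ ?_
    · rintro ⟨x, y⟩ hp
      simp only [Finset.mem_filter] at hp
      obtain ⟨⟨hpE, hx⟩, hy⟩ := hp
      obtain ⟨hxA, hyA, hcard⟩ := (memE _).1 hpE
      have hyx : y = insert i x := by
        refine eq_insert_of_symmDiff hy hx ?_
        rw [symmDiff_comm]; exact hcard
      rw [Finset.mem_inter, mem_secUp, mem_secDown]
      exact ⟨⟨hx, hyx ▸ hyA⟩, hx, hxA⟩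
    · rintro z hz
      rw [Finset.mem_inter, mem_secUp, mem_secDown] at hz
      obtain ⟨⟨hiz, hins⟩, _, hzA⟩ := hz
      simp only [Finset.mem_filter]
      refine ⟨⟨(memE _).2 ⟨hzA, hins, ?_⟩, hiz⟩, Finset.mem_insert_self _ _⟩
      rw [symmDiff_comm, symmDiff_insert_self' hiz]; simp
    · rintro ⟨x, y⟩ hp
      simp only [Finset.mem_filter] at hp
      obtain ⟨⟨hpE, hx⟩, hy⟩ := hp
      obtain ⟨hxA, hyA, hcard⟩ := (memE _).1 hpE
      have hyx : y = insert i x := by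
        refine eq_insert_of_symmDiff hy hx ?_
        rw [symmDiff_comm]; exact hcard
      simp [hyx]
    · rintro z _; rfl
  omega

lemma mem_barFam {n : ℕ} {A : Finset (Finset (Fin n))} {x : Finset (Fin n)} :
    x ∈ barFam A ↔ xᶜ ∈ A := by
  simp only [barFam, Finset.mem_image]
  constructor
  · rintro ⟨a, ha, rfl⟩; simpa using ha
  · intro h; exact ⟨xᶜ, h, by simp⟩

lemma mem_barOn_secDown {n : ℕ} {A : Finset (Finset (Fin n))} {i : Fin n}
    {y : Finset (Fin n)} :
    y ∈ barOn (Finset.univ.erase i) (secDown A i) ↔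
      i ∉ y ∧ (Finset.univ.erase i) \ y ∈ A := by
  set s : Finset (Fin n) := Finset.univ.erase i with hs
  have his : i ∉ s := by simp [hs]
  have hsub : ∀ z : Finset (Fin n), i ∉ z → z ⊆ s := by
    intro z hz
    rw [hs, Finset.subset_erase]
    exact ⟨Finset.subset_univ _, hz⟩
  have hdd : ∀ z : Finset (Fin n), i ∉ z → s \ (s \ z) = z := by
    intro z hz
    rw [Finset.sdiff_sdiff_self_left, Finset.inter_eq_right.2 (hsub z hz)]
  simp only [barOn, Finset.mem_image, mem_secDown]
  constructor
  · rintro ⟨z, ⟨hiz, hzA⟩, rfl⟩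
    refine ⟨fun h => his (Finset.mem_sdiff.1 h).1, ?_⟩
    rw [hdd z hiz]; exact hzA
  · rintro ⟨hiy, hA⟩
    exact ⟨s \ y, ⟨fun h => his (Finset.mem_sdiff.1 h).1, hA⟩, hdd y hiy⟩

lemma bar_split {n : ℕ} (A : Finset (Finset (Fin n))) (i : Fin n) :
    (A ∩ barFam A).card =
      2 * (secUp A i ∩ barOn (Finset.univ.erase i) (secDown A i)).card := by
  classical
  set s : Finset (Fin n) := Finset.univ.erase i with hs
  have his : i ∉ s := by simp [hs]
  set T := A ∩ barFam A with hT
  have memT : ∀ x, x ∈ T ↔ x ∈ A ∧ xᶜ ∈ A := by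
    intro x; rw [hT, Finset.mem_inter, mem_barFam]
  have memTar : ∀ y, y ∈ secUp A i ∩ barOn s (secDown A i) ↔
      (i ∉ y ∧ insert i y ∈ A) ∧ (i ∉ y ∧ s \ y ∈ A) := by
    intro y
    rw [Finset.mem_inter, mem_secUp, hs, mem_barOn_secDown]
  have h1 := Finset.card_filter_add_card_filter_not
      (s := T) (p := fun x => i ∈ x)
  have e1 : ∀ x : Finset (Fin n), i ∈ x → s \ x.erase i = xᶜ := by
    intro x hix
    ext j
    by_cases hj : j = i
    · subst hj; simp [hs, hix]
    · simp [hs, hj]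
  have e2 : ∀ y : Finset (Fin n), i ∉ y → (insert i y)ᶜ = s \ y := by
    intro y _
    ext j
    by_cases hj : j = i <;> simp [hs, hj]
  have e3 : ∀ x : Finset (Fin n), i ∉ x → insert i (s \ x) = xᶜ := by
    intro x hix
    ext j
    by_cases hj : j = i
    · subst hj; simp [hs, hix]
    · simp [hs, hj]
  have e4 : ∀ y : Finset (Fin n), i ∉ y → (s \ y)ᶜ = insert i y := by
    intro y hiy
    ext j
    by_cases hj : j = i <;> simp [hs, hj]
  have hdd : ∀ z : Finset (Fin n), i ∉ z → s \ (s \ z) = z := by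
    intro z hz
    rw [Finset.sdiff_sdiff_self_left, Finset.inter_eq_right.2 ?_]
    rw [hs, Finset.subset_erase]
    exact ⟨Finset.subset_univ _, hz⟩
  have hA1 : (T.filter (fun x => i ∈ x)).card =
      (secUp A i ∩ barOn s (secDown A i)).card := by
    refine Finset.card_bij' (fun x _ => x.erase i) (fun y _ => insert i y) ?_ ?_ ?_ ?_
    · intro x hx
      simp only [Finset.mem_filter] at hx
      obtain ⟨hxT, hix⟩ := hx
      obtain ⟨hxA, hxcA⟩ := (memT x).1 hxT
      rw [memTar]
      refine ⟨⟨Finset.notMem_erase _ _, by rwa [Finset.insert_erase hix]⟩,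
        Finset.notMem_erase _ _, ?_⟩
      rw [e1 x hix]; exact hxcA
    · intro y hy
      rw [memTar] at hy
      obtain ⟨⟨hiy, hins⟩, _, hsd⟩ := hy
      simp only [Finset.mem_filter]
      refine ⟨(memT _).2 ⟨hins, ?_⟩, Finset.mem_insert_self _ _⟩
      rw [e2 y hiy]; exact hsd
    · intro x hx
      simp only [Finset.mem_filter] at hx
      exact Finset.insert_erase hx.2
    · intro y hy
      rw [memTar] at hy
      exact Finset.erase_insert hy.1.1
  have hA2 : (T.filter (fun x => ¬ i ∈ x)).card =
      (secUp A i ∩ barOn s (secDown A i)).card := by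
    refine Finset.card_bij' (fun x _ => s \ x) (fun y _ => s \ y) ?_ ?_ ?_ ?_
    · intro x hx
      simp only [Finset.mem_filter] at hx
      obtain ⟨hxT, hix⟩ := hx
      obtain ⟨hxA, hxcA⟩ := (memT x).1 hxT
      have hisd : i ∉ s \ x := fun h => his (Finset.mem_sdiff.1 h).1
      rw [memTar]
      refine ⟨⟨hisd, ?_⟩, hisd, ?_⟩
      · rw [e3 x hix]; exact hxcA
      · rw [hdd x hix]; exact hxA
    · intro y hy
      rw [memTar] at hy
      obtain ⟨⟨hiy, hins⟩, _, hsd⟩ := hy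
      have hisd : i ∉ s \ y := fun h => his (Finset.mem_sdiff.1 h).1
      simp only [Finset.mem_filter]
      refine ⟨(memT _).2 ⟨hsd, ?_⟩, hisd⟩
      rw [e4 y hiy]; exact hins
    · intro x hx
      simp only [Finset.mem_filter] at hx
      exact hdd x hx.2
    · intro y hy
      rw [memTar] at hy
      exact hdd y hy.1.1
  omega

theorem stmt17 (n : ℕ) (A : Finset (Finset (Fin n))) (i : Fin n) :
    2 * edgeCount A + (A ∩ barFam A).card =
      2 * edgeCount (secUp A i) + 2 * edgeCount (secDown A i)
        + 2 * (secUp A i ∩ secDown A i).card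
        + 2 * (secUp A i ∩ barOn (Finset.univ.erase i) (secDown A i)).card := by
  have h1 := two_mul_edgeCount' A
  have h2 := two_mul_edgeCount' (secUp A i)
  have h3 := two_mul_edgeCount' (secDown A i)
  have h4 := edge_split A i
  have h5 := bar_split A i
  omega
end

section
/- Let A be an antipodal family of subsets of [n] (A = Ā). Then A_n^- = complement-bar(A_n^+) (bar taken in [n-1]), |A_n^+| = |A|/2, and e(A) = f(A_n^+), where f(C) := 2e(C) + |C ∩ C̄| with C̄ the antipodal image in P([n-1]). -/
open Finset

section helpers

variable {n : ℕ}

private lemma mem_antipodal {A : Finset (Finset (Fin n))} (hA : barFam A = A)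
    {x : Finset (Fin n)} : xᶜ ∈ A ↔ x ∈ A := by
  constructor
  · intro h
    have h2 : xᶜᶜ ∈ barFam A := Finset.mem_image_of_mem _ h
    rwa [hA, compl_compl] at h2
  · intro h
    rw [← hA]; exact Finset.mem_image_of_mem _ h

private lemma compl_eq_insert (i : Fin n) {x : Finset (Fin n)} (hx : i ∉ x) :
    xᶜ = insert i (Finset.univ.erase i \ x) := by
  ext j
  by_cases hj : j = i
  · subst hj; simp [hx]
  · simp [hj]

private lemma subset_erase_of_notMem {i : Fin n} {x : Finset (Fin n)} (hx : i ∉ x) :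
    x ⊆ Finset.univ.erase i :=
  (Finset.subset_erase).2 ⟨Finset.subset_univ _, hx⟩

private lemma sdiff_sdiff_cancel (i : Fin n) {x : Finset (Fin n)} (hx : i ∉ x) :
    Finset.univ.erase i \ (Finset.univ.erase i \ x) = x :=
  Finset.sdiff_sdiff_eq_self (subset_erase_of_notMem hx)

/-- Part 1, as a standalone lemma. -/
private lemma part1 {A : Finset (Finset (Fin n))} (hA : barFam A = A) (i : Fin n) :
    secDown A i = barOn (Finset.univ.erase i) (secUp A i) := by
  ext y
  simp only [secDown, secUp, barOn, Finset.mem_filter, Finset.mem_univ, true_and,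
    Finset.mem_image]
  constructor
  · rintro ⟨hiy, hyA⟩
    refine ⟨Finset.univ.erase i \ y, ⟨?_, ?_⟩, sdiff_sdiff_cancel i hiy⟩
    · simp
    · rw [← compl_eq_insert i hiy]
      exact (mem_antipodal hA).mpr hyA
  · rintro ⟨x, ⟨hix, hxA⟩, rfl⟩
    refine ⟨by simp, ?_⟩
    have h1 : i ∉ Finset.univ.erase i \ x := by simp
    have h2 : (Finset.univ.erase i \ x)ᶜ = insert i x := by
      rw [compl_eq_insert i h1, sdiff_sdiff_cancel i hix]
    have := (mem_antipodal hA (x := Finset.univ.erase i \ x)).mp (by rwa [h2])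
    exact this

private lemma insert_inj_on {i : Fin n} {x y : Finset (Fin n)} (hx : i ∉ x) (hy : i ∉ y)
    (h : insert i x = insert i y) : x = y := by
  have := congrArg (fun s => Finset.erase s i) h
  simpa [Finset.erase_insert hx, Finset.erase_insert hy] using this

private lemma symmDiff_insert {i : Fin n} {x y : Finset (Fin n)} (hx : i ∉ x) (hy : i ∉ y) :
    symmDiff (insert i x) (insert i y) = symmDiff x y := by
  ext j
  by_cases hj : j = i
  · subst hj; simp [Finset.mem_symmDiff, hx, hy]
  · simp [Finset.mem_symmDiff, hj]

private lemma symmDiffSdiffGround {s x y : Finset (Fin n)} (hx : x ⊆ s) (hy : y ⊆ s) :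
    symmDiff (s \ x) (s \ y) = symmDiff x y := by
  ext j
  by_cases hjs : j ∈ s
  · simp only [Finset.mem_symmDiff, Finset.mem_sdiff, hjs, true_and]
    tauto
  · simp only [Finset.mem_symmDiff, Finset.mem_sdiff, hjs, false_and, false_or, not_false_iff,
      and_true]
    constructor
    · rintro (⟨h, _⟩ | ⟨h, _⟩) <;> exact absurd h (by simp [hjs])
    · rintro (⟨h, _⟩ | ⟨h, _⟩)
      · exact absurd (hx h) hjs
      · exact absurd (hy h) hjs

private lemma even_pairs (B : Finset (Finset (Fin n))) :
    2 ∣ ((B ×ˢ B).filter (fun p => (symmDiff p.1 p.2).card = 1)).card := by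
  classical
  set S := (B ×ˢ B).filter (fun p => (symmDiff p.1 p.2).card = 1) with hS
  let e : Finset (Fin n) → ℕ := fun x => (Fintype.equivFin (Finset (Fin n)) x : ℕ)
  have he : Function.Injective e := fun a b h => by
    exact (Fintype.equivFin (Finset (Fin n))).injective (Fin.ext h)
  have hswap : ∀ p : Finset (Fin n) × Finset (Fin n), p ∈ S → p.swap ∈ S := by
    intro p hp
    simp only [hS, Finset.mem_filter, Finset.mem_product] at hp ⊢
    exact ⟨⟨hp.1.2, hp.1.1⟩, by rw [Prod.fst_swap, Prod.snd_swap, symmDiff_comm]; exact hp.2⟩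
  have hne : ∀ p ∈ S, p.1 ≠ p.2 := by
    intro p hp h
    simp only [hS, Finset.mem_filter] at hp
    rw [h, symmDiff_self] at hp
    simp at hp
  have hsplit : S = S.filter (fun p => e p.1 < e p.2) ∪ S.filter (fun p => e p.2 < e p.1) := by
    rw [← Finset.filter_or]
    refine (Finset.filter_true_of_mem ?_).symm
    intro p hp
    rcases lt_trichotomy (e p.1) (e p.2) with h | h | h
    · exact Or.inl h
    · exact absurd (he h) (hne p hp)
    · exact Or.inr h
  have hdisj : Disjoint (S.filter (fun p => e p.1 < e p.2))
      (S.filter (fun p => e p.2 < e p.1)) := by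
    rw [Finset.disjoint_left]
    intro p hp1 hp2
    simp only [Finset.mem_filter] at hp1 hp2
    omega
  have hcardeq : (S.filter (fun p => e p.1 < e p.2)).card
      = (S.filter (fun p => e p.2 < e p.1)).card := by
    apply Finset.card_bij (fun p _ => p.swap)
    · intro p hp
      simp only [Finset.mem_filter] at hp ⊢
      exact ⟨hswap p hp.1, by simpa using hp.2⟩
    · intro p hp q hq h
      exact Prod.swap_injective h
    · intro p hp
      refine ⟨p.swap, ?_, by simp⟩
      simp only [Finset.mem_filter] at hp ⊢
      exact ⟨hswap p hp.1, by simpa using hp.2⟩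
  rw [hsplit, Finset.card_union_of_disjoint hdisj, ← hcardeq]
  omega

end helpers

theorem stmt18 (n : ℕ) (hn : 1 ≤ n) (A : Finset (Finset (Fin n)))
    (hA : barFam A = A) :
    secDown A ⟨n - 1, Nat.sub_lt hn Nat.one_pos⟩ =
      barOn (Finset.univ.erase ⟨n - 1, Nat.sub_lt hn Nat.one_pos⟩)
        (secUp A ⟨n - 1, Nat.sub_lt hn Nat.one_pos⟩) ∧
    (secUp A ⟨n - 1, Nat.sub_lt hn Nat.one_pos⟩).card = A.card / 2 ∧
    edgeCount A =
      2 * edgeCount (secUp A ⟨n - 1, Nat.sub_lt hn Nat.one_pos⟩)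
        + ((secUp A ⟨n - 1, Nat.sub_lt hn Nat.one_pos⟩) ∩
            barOn (Finset.univ.erase ⟨n - 1, Nat.sub_lt hn Nat.one_pos⟩)
              (secUp A ⟨n - 1, Nat.sub_lt hn Nat.one_pos⟩)).card := by
  classical
  set i : Fin n := ⟨n - 1, Nat.sub_lt hn Nat.one_pos⟩ with hi
  set s : Finset (Fin n) := Finset.univ.erase i with hs
  set U : Finset (Finset (Fin n)) := secUp A i with hU
  set D : Finset (Finset (Fin n)) := secDown A i with hD
  have hpart1 : D = barOn s U := part1 hA i
  -- membership characterizations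
  have hUmem : ∀ x, x ∈ U ↔ i ∉ x ∧ insert i x ∈ A := by
    intro x; simp [hU, secUp]
  have hDmem : ∀ x, x ∈ D ↔ i ∉ x ∧ x ∈ A := by
    intro x; simp [hD, secDown]
  -- A⁺ and A⁻
  set Ap : Finset (Finset (Fin n)) := A.filter (fun x => i ∈ x) with hAp
  set Am : Finset (Finset (Fin n)) := A.filter (fun x => i ∉ x) with hAm
  have hAmD : Am = D := by
    ext x; simp [hAm, hDmem x, and_comm]
  have hcardApU : Ap.card = U.card := by
    apply Finset.card_bij (fun x _ => Finset.erase x i)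
    · intro a ha
      simp only [hAp, Finset.mem_filter] at ha
      rw [hUmem]
      exact ⟨Finset.notMem_erase i a, by rw [Finset.insert_erase ha.2]; exact ha.1⟩
    · intro a ha b hb h
      simp only [hAp, Finset.mem_filter] at ha hb
      have := congrArg (insert i) h
      rwa [Finset.insert_erase ha.2, Finset.insert_erase hb.2] at this
    · intro b hb
      rw [hUmem] at hb
      refine ⟨insert i b, ?_, by rw [Finset.erase_insert hb.1]⟩
      simp only [hAp, Finset.mem_filter]
      exact ⟨hb.2, Finset.mem_insert_self i b⟩
  have hcardDU : D.card = U.card := by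
    rw [hpart1, hs]
    apply Finset.card_image_of_injOn
    intro a ha b hb h
    have ha' := (hUmem a).mp ha
    have hb' := (hUmem b).mp hb
    have := congrArg (fun t => Finset.univ.erase i \ t) h
    simpa [sdiff_sdiff_cancel i ha'.1, sdiff_sdiff_cancel i hb'.1] using this
  have hcardA : A.card = 2 * U.card := by
    have := Finset.card_filter_add_card_filter_not
      (s := A) (p := fun x => i ∈ x)
    rw [← hAp] at this
    have h2 : (Finset.filter (fun x => ¬ i ∈ x) A) = Am := rfl
    rw [h2, hAmD, hcardApU, hcardDU] at this
    omega
  have part2 : U.card = A.card / 2 := by omega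
  refine ⟨hpart1, part2, ?_⟩
  -- Part 3
  set pred : Finset (Fin n) × Finset (Fin n) → Prop :=
    fun p => (symmDiff p.1 p.2).card = 1 with hpred
  have hApm : ∀ x ∈ A, (x ∈ Ap ∧ x ∉ Am) ∨ (x ∈ Am ∧ x ∉ Ap) := by
    intro x hx
    by_cases h : i ∈ x
    · exact Or.inl (by simp [hAp, hAm, hx, h])
    · exact Or.inr (by simp [hAp, hAm, hx, h])
  have hunion : A = Ap ∪ Am := by
    ext x
    constructor
    · intro hx
      rcases hApm x hx with ⟨h, _⟩ | ⟨h, _⟩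
      · exact Finset.mem_union_left _ h
      · exact Finset.mem_union_right _ h
    · intro hx
      rcases Finset.mem_union.mp hx with h | h
      · exact Finset.mem_of_mem_filter x h
      · exact Finset.mem_of_mem_filter x h
  have hdisjAp : Disjoint Ap Am := by
    rw [Finset.disjoint_left]
    intro x h1 h2
    simp only [hAp, hAm, Finset.mem_filter] at h1 h2
    exact h2.2 h1.2
  -- split the pair count
  have hprod : (A ×ˢ A).filter pred
      = ((Ap ×ˢ Ap).filter pred ∪ (Ap ×ˢ Am).filter pred)
        ∪ ((Am ×ˢ Ap).filter pred ∪ (Am ×ˢ Am).filter pred) := by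
    rw [hunion, Finset.union_product, Finset.product_union, Finset.product_union,
      Finset.filter_union, Finset.filter_union, Finset.filter_union]
  -- disjointness helpers
  have hdfst : ∀ (t t' : Finset (Finset (Fin n))),
      Disjoint ((Ap ×ˢ t).filter pred) ((Am ×ˢ t').filter pred) := by
    intro t t'
    rw [Finset.disjoint_left]
    intro p hp hp'
    simp only [Finset.mem_filter, Finset.mem_product] at hp hp'
    exact (Finset.disjoint_left.mp hdisjAp hp.1.1) hp'.1.1
  have hdsnd : ∀ (t t' : Finset (Finset (Fin n))),
      Disjoint ((t ×ˢ Ap).filter pred) ((t' ×ˢ Am).filter pred) := by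
    intro t t'
    rw [Finset.disjoint_left]
    intro p hp hp'
    simp only [Finset.mem_filter, Finset.mem_product] at hp hp'
    exact (Finset.disjoint_left.mp hdisjAp hp.1.2) hp'.1.2
  have hcardtot : ((A ×ˢ A).filter pred).card
      = ((Ap ×ˢ Ap).filter pred).card + ((Ap ×ˢ Am).filter pred).card
        + (((Am ×ˢ Ap).filter pred).card + ((Am ×ˢ Am).filter pred).card) := by
    rw [hprod, Finset.card_union_of_disjoint, Finset.card_union_of_disjoint (hdsnd Ap Ap),
      Finset.card_union_of_disjoint (hdsnd Am Am)]
    · exact Finset.disjoint_union_right.2 ⟨Finset.disjoint_union_left.2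
        ⟨hdfst Ap Ap, hdfst Am Ap⟩, Finset.disjoint_union_left.2 ⟨hdfst Ap Am, hdfst Am Am⟩⟩
  -- block (++): equals U-block
  have hc11 : ((Ap ×ˢ Ap).filter pred).card = ((U ×ˢ U).filter pred).card := by
    symm
    apply Finset.card_bij (fun q _ => (insert i q.1, insert i q.2))
    · intro q hq
      simp only [Finset.mem_filter, Finset.mem_product] at hq ⊢
      have h1 := (hUmem q.1).mp hq.1.1
      have h2 := (hUmem q.2).mp hq.1.2
      refine ⟨⟨?_, ?_⟩, ?_⟩
      · simp only [hAp, Finset.mem_filter]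
        exact ⟨h1.2, Finset.mem_insert_self i q.1⟩
      · simp only [hAp, Finset.mem_filter]
        exact ⟨h2.2, Finset.mem_insert_self i q.2⟩
      · show (symmDiff (insert i q.1) (insert i q.2)).card = 1
        rw [symmDiff_insert h1.1 h2.1]
        exact hq.2
    · intro q hq r hr h
      simp only [Finset.mem_filter, Finset.mem_product] at hq hr
      have h1 := (hUmem q.1).mp hq.1.1
      have h2 := (hUmem q.2).mp hq.1.2
      have h3 := (hUmem r.1).mp hr.1.1
      have h4 := (hUmem r.2).mp hr.1.2
      have e1 : insert i q.1 = insert i r.1 := congrArg Prod.fst h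
      have e2 : insert i q.2 = insert i r.2 := congrArg Prod.snd h
      exact Prod.ext (insert_inj_on h1.1 h3.1 e1) (insert_inj_on h2.1 h4.1 e2)
    · intro p hp
      simp only [Finset.mem_filter, Finset.mem_product, hAp] at hp
      obtain ⟨⟨hp1, hp2⟩, hp3⟩ := hp
      refine ⟨(p.1.erase i, p.2.erase i), ?_, ?_⟩
      · simp only [Finset.mem_filter, Finset.mem_product]
        refine ⟨⟨(hUmem _).mpr ⟨Finset.notMem_erase i p.1, ?_⟩,
          (hUmem _).mpr ⟨Finset.notMem_erase i p.2, ?_⟩⟩, ?_⟩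
        · rw [Finset.insert_erase hp1.2]; exact hp1.1
        · rw [Finset.insert_erase hp2.2]; exact hp2.1
        · show (symmDiff (p.1.erase i) (p.2.erase i)).card = 1
          have : symmDiff (insert i (p.1.erase i)) (insert i (p.2.erase i))
              = symmDiff (p.1.erase i) (p.2.erase i) :=
            symmDiff_insert (Finset.notMem_erase i p.1) (Finset.notMem_erase i p.2)
          rw [Finset.insert_erase hp1.2, Finset.insert_erase hp2.2] at this
          rw [← this]; exact hp3
      · simp only
        rw [Finset.insert_erase hp1.2, Finset.insert_erase hp2.2]
  -- block (--): equals U-block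
  have hUsub : ∀ x ∈ U, x ⊆ s := by
    intro x hx
    exact subset_erase_of_notMem ((hUmem x).mp hx).1
  have hsdiffU : ∀ x ∈ U, s \ x ∈ D := by
    intro x hx
    rw [hpart1]
    exact Finset.mem_image_of_mem _ hx
  have hsdiffD : ∀ d ∈ D, s \ d ∈ U ∧ s \ (s \ d) = d := by
    intro d hd
    have hd' := (hDmem d).mp hd
    rw [hpart1] at hd
    obtain ⟨x, hx, hxe⟩ := Finset.mem_image.mp hd
    have hx' := (hUmem x).mp hx
    have : s \ d = x := by
      rw [← hxe, hs, sdiff_sdiff_cancel i hx'.1]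
    refine ⟨this ▸ hx, ?_⟩
    rw [this, ← hxe]
  have hc22 : ((Am ×ˢ Am).filter pred).card = ((U ×ˢ U).filter pred).card := by
    rw [hAmD]
    symm
    apply Finset.card_bij (fun q _ => (s \ q.1, s \ q.2))
    · intro q hq
      simp only [Finset.mem_filter, Finset.mem_product] at hq ⊢
      refine ⟨⟨hsdiffU q.1 hq.1.1, hsdiffU q.2 hq.1.2⟩, ?_⟩
      show (symmDiff (s \ q.1) (s \ q.2)).card = 1
      rw [symmDiffSdiffGround (hUsub q.1 hq.1.1) (hUsub q.2 hq.1.2)]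
      exact hq.2
    · intro q hq r hr h
      simp only [Finset.mem_filter, Finset.mem_product] at hq hr
      have e1 : s \ q.1 = s \ r.1 := congrArg Prod.fst h
      have e2 : s \ q.2 = s \ r.2 := congrArg Prod.snd h
      have q1 := (hUmem q.1).mp hq.1.1
      have q2 := (hUmem q.2).mp hq.1.2
      have r1 := (hUmem r.1).mp hr.1.1
      have r2 := (hUmem r.2).mp hr.1.2
      have c1 := congrArg (fun t => s \ t) e1
      have c2 := congrArg (fun t => s \ t) e2
      simp only [hs] at c1 c2
      rw [sdiff_sdiff_cancel i q1.1, sdiff_sdiff_cancel i r1.1] at c1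
      rw [sdiff_sdiff_cancel i q2.1, sdiff_sdiff_cancel i r2.1] at c2
      exact Prod.ext c1 c2
    · intro p hp
      simp only [Finset.mem_filter, Finset.mem_product] at hp
      obtain ⟨⟨hp1, hp2⟩, hp3⟩ := hp
      obtain ⟨hu1, he1⟩ := hsdiffD p.1 hp1
      obtain ⟨hu2, he2⟩ := hsdiffD p.2 hp2
      refine ⟨(s \ p.1, s \ p.2), ?_, ?_⟩
      · simp only [Finset.mem_filter, Finset.mem_product]
        refine ⟨⟨hu1, hu2⟩, ?_⟩
        show (symmDiff (s \ p.1) (s \ p.2)).card = 1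
        have hd1 := (hDmem p.1).mp hp1
        have hd2 := (hDmem p.2).mp hp2
        rw [hs, symmDiffSdiffGround (subset_erase_of_notMem hd1.1)
          (subset_erase_of_notMem hd2.1)]
        exact hp3
      · simp only
        rw [he1, he2]
  -- cross block (+-): equals |U ∩ D|
  have hsymmsingle : ∀ b : Finset (Fin n), i ∉ b → symmDiff (insert i b) b = {i} := by
    intro b hb
    ext j
    by_cases hj : j = i
    · subst hj
      simp [Finset.mem_symmDiff, hb]
    · simp [Finset.mem_symmDiff, hj]
  have hc12 : ((Ap ×ˢ Am).filter pred).card = (U ∩ D).card := by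
    symm
    apply Finset.card_bij (fun b _ => (insert i b, b))
    · intro b hb
      rw [Finset.mem_inter] at hb
      have hbU := (hUmem b).mp hb.1
      have hbD := (hDmem b).mp hb.2
      rw [Finset.mem_filter, Finset.mem_product]
      refine ⟨⟨Finset.mem_filter.mpr ⟨hbU.2, Finset.mem_insert_self i b⟩,
        Finset.mem_filter.mpr ⟨hbD.2, hbD.1⟩⟩, ?_⟩
      show (symmDiff (insert i b) b).card = 1
      rw [hsymmsingle b hbU.1]
      exact Finset.card_singleton i
    · intro a ha b hb h
      exact congrArg Prod.snd h
    · intro p hp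
      simp only [Finset.mem_filter, Finset.mem_product, hAp, hAm] at hp
      obtain ⟨⟨hp1, hp2⟩, hp3⟩ := hp
      have hiS : i ∈ symmDiff p.1 p.2 := by
        rw [Finset.mem_symmDiff]
        exact Or.inl ⟨hp1.2, hp2.2⟩
      have hsingle : symmDiff p.1 p.2 = {i} := by
        obtain ⟨c, hc⟩ := Finset.card_eq_one.mp hp3
        rw [hc] at hiS ⊢
        rw [Finset.mem_singleton] at hiS
        rw [hiS]
      have hpeq : p.1 = insert i p.2 := by
        ext j
        by_cases hj : j = i
        · subst hj; simp [hp1.2]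
        · have : j ∉ symmDiff p.1 p.2 := by rw [hsingle]; simp [hj]
          rw [Finset.mem_symmDiff] at this
          push_neg at this
          simp only [Finset.mem_insert, hj, false_or]
          exact ⟨this.1, this.2⟩
      refine ⟨p.2, ?_, ?_⟩
      · rw [Finset.mem_inter]
        exact ⟨(hUmem p.2).mpr ⟨hp2.2, hpeq ▸ hp1.1⟩, (hDmem p.2).mpr ⟨hp2.2, hp2.1⟩⟩
      · exact Prod.ext hpeq.symm rfl
  -- cross block (-+): same count by swapping
  have hc21 : ((Am ×ˢ Ap).filter pred).card = ((Ap ×ˢ Am).filter pred).card := by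
    apply Finset.card_bij (fun p _ => p.swap)
    · intro p hp
      simp only [Finset.mem_filter, Finset.mem_product] at hp ⊢
      refine ⟨⟨hp.1.2, hp.1.1⟩, ?_⟩
      show (symmDiff p.2 p.1).card = 1
      rw [symmDiff_comm]
      exact hp.2
    · intro p hp q hq h
      exact Prod.swap_injective h
    · intro p hp
      refine ⟨p.swap, ?_, by simp⟩
      simp only [Finset.mem_filter, Finset.mem_product] at hp ⊢
      refine ⟨⟨hp.1.2, hp.1.1⟩, ?_⟩
      show (symmDiff p.2 p.1).card = 1
      rw [symmDiff_comm]
      exact hp.2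
  -- assemble
  have hEA : edgeCount A = ((A ×ˢ A).filter pred).card / 2 := rfl
  have hEU : edgeCount U = ((U ×ˢ U).filter pred).card / 2 := rfl
  have heven : 2 ∣ ((U ×ˢ U).filter pred).card := even_pairs U
  have hbar : (U ∩ barOn s U).card = (U ∩ D).card :=
    congrArg (fun t => (U ∩ t).card) hpart1.symm
  rw [hEA, hcardtot, hc11, hc22, hc12, hc21, hc12, hEU, hbar]
  omega
end
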